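/- arXiv:1508.03455 — 9 statements merged into one kernel-verified Lean document; each statement's English description precedes it below -/
import Mathlib

section
/- In a stochastic game, for every potential vector x ∈ ℝ^V, every subset S ⊆ V, every real δ ≥ 0, and every position v ∉ S, the local values satisfy m^v(x) ≤ m^v(x − δ·e_S) ≤ m^v(x) + δ · max_{k∈K^v, ℓ∈L^v} ∑_{u∈S} p^{vu}_{kℓ}. -/
/-
Shifting the potential down by `δ` on `S` leaves `x^v` unchanged (as `v ∉ S`) and raises the
entry `a^v_{kℓ}` by exactly `δ · ∑_{u ∈ S} p^{vu}_{kℓ}`, an amount between `0` and `δ` times the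
maximum in the statement. The value of a matrix game is monotone and moves by at most `c`
when every entry moves by at most `c`, which gives both inequalities.
-/

open Matrix

/-- The value of a finite zero-sum matrix game:
`Val(A) = max_{α ∈ Δ(K)} min_{β ∈ Δ(L)} αᵀ A β`. -/
noncomputable def matVal {K L : Type*} [Fintype K] [Fintype L]
    (A : Matrix K L ℝ) : ℝ :=
  ⨆ α : stdSimplex ℝ K, ⨅ β : stdSimplex ℝ L, ∑ k, ∑ l, α.1 k * A k l * β.1 l

variable {V : Type*} [Fintype V] [DecidableEq V] [Nonempty V]
  {K L : V → Type*} [∀ v, Fintype (K v)] [∀ v, Nonempty (K v)]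
  [∀ v, Fintype (L v)] [∀ v, Nonempty (L v)]

/-- The potential-transformed local reward matrix `A^v(x)` of a stochastic game
with transition probabilities `p` and rewards `r`:
`a^v_{kℓ}(x) = ∑_u p^{vu}_{kℓ} (r^{vu}_{kℓ} + x^v − x^u)`. -/
noncomputable def locMat (p r : ∀ v : V, K v → L v → V → ℝ) (x : V → ℝ) (v : V) :
    Matrix (K v) (L v) ℝ :=
  Matrix.of fun k l => ∑ u, p v k l u * (r v k l u + x v - x u)

/-- The local value `m^v(x) = Val(A^v(x))`. -/
noncomputable def locVal (p r : ∀ v : V, K v → L v → V → ℝ) (x : V → ℝ) (v : V) : ℝ :=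
  matVal (locMat p r x v)

section MatrixGame

variable {m n : Type*} [Fintype m] [Fintype n]

noncomputable def payoff (A : Matrix m n ℝ) (α : stdSimplex ℝ m) (β : stdSimplex ℝ n) : ℝ :=
  ∑ k, ∑ l, α.1 k * A k l * β.1 l

lemma matVal_eq_iSup_iInf_payoff (A : Matrix m n ℝ) :
    matVal A = ⨆ α, ⨅ β, payoff A α β :=
  rfl

lemma payoff_zero (α : stdSimplex ℝ m) (β : stdSimplex ℝ n) : payoff 0 α β = 0 := by
  simp [payoff]

lemma payoff_le_payoff_add {A B : Matrix m n ℝ} {c : ℝ} (h : ∀ k l, A k l ≤ B k l + c)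
    (α : stdSimplex ℝ m) (β : stdSimplex ℝ n) : payoff A α β ≤ payoff B α β + c := by
  have hconst : ∑ k, ∑ l, α.1 k * c * β.1 l = c := by
    simp only [← Finset.mul_sum, β.2.2, mul_one, ← Finset.sum_mul, α.2.2, one_mul]
  calc payoff A α β ≤ ∑ k, ∑ l, α.1 k * (B k l + c) * β.1 l := by
        unfold payoff
        gcongr with k _ l _
        · exact β.2.1 l
        · exact α.2.1 k
        · exact h k l
    _ = payoff B α β + c := by
        simp only [payoff, mul_add, add_mul, Finset.sum_add_distrib, hconst]

lemma bddBelow_range_payoff (A : Matrix m n ℝ) (α : stdSimplex ℝ m) :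
    BddBelow (Set.range fun β => payoff A α β) := by
  obtain ⟨b, hb⟩ := Finite.bddBelow_range fun kl : m × n => A kl.1 kl.2
  refine ⟨b, Set.forall_mem_range.2 fun β => ?_⟩
  have := payoff_le_payoff_add (A := 0) (B := A) (c := -b)
    (fun k l => by simpa [neg_add_eq_sub, sub_nonneg] using hb ⟨(k, l), rfl⟩) α β
  linarith [payoff_zero α β]

lemma bddAbove_range_iInf_payoff [Nonempty n] (A : Matrix m n ℝ) :
    BddAbove (Set.range fun α => ⨅ β, payoff A α β) := by
  obtain ⟨M, hM⟩ := Finite.bddAbove_range fun kl : m × n => A kl.1 kl.2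
  refine ⟨M, Set.forall_mem_range.2 fun α => ?_⟩
  let β₀ : stdSimplex ℝ n := Classical.arbitrary _
  calc ⨅ β, payoff A α β ≤ payoff A α β₀ := ciInf_le (bddBelow_range_payoff A α) β₀
    _ ≤ payoff 0 α β₀ + M := payoff_le_payoff_add (fun k l => by simpa using hM ⟨(k, l), rfl⟩) α β₀
    _ = M := by rw [payoff_zero, zero_add]

variable [Nonempty m] [Nonempty n]

lemma matVal_le_add {A B : Matrix m n ℝ} {c : ℝ} (h : ∀ k l, A k l ≤ B k l + c) :
    matVal A ≤ matVal B + c := by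
  rw [matVal_eq_iSup_iInf_payoff, matVal_eq_iSup_iInf_payoff]
  refine ciSup_le fun α => ?_
  have hinf : ⨅ β, payoff A α β ≤ (⨅ β, payoff B α β) + c := by
    rw [← sub_le_iff_le_add]
    refine le_ciInf fun β => ?_
    linarith [ciInf_le (bddBelow_range_payoff A α) β, payoff_le_payoff_add h α β]
  linarith [le_ciSup (bddAbove_range_iInf_payoff B) α]

lemma matVal_mono {A B : Matrix m n ℝ} (h : ∀ k l, A k l ≤ B k l) : matVal A ≤ matVal B := by
  simpa using matVal_le_add (c := 0) (by simpa using h)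

end MatrixGame

lemma locMat_sub_mul_indicator_apply {V : Type*} [Fintype V] [DecidableEq V] {K L : V → Type*}
    (p r : ∀ v : V, K v → L v → V → ℝ) (x : V → ℝ) (S : Finset V) (δ : ℝ) {v : V} (hv : v ∉ S)
    (k : K v) (l : L v) :
    locMat p r (fun u => x u - δ * (if u ∈ S then 1 else 0)) v k l =
      locMat p r x v k l + δ * ∑ u ∈ S, p v k l u := by
  have hS : ∑ u ∈ S, p v k l u = ∑ u, p v k l u * (if u ∈ S then 1 else 0) := by
    simp only [mul_ite, mul_one, mul_zero, Finset.sum_ite_mem, Finset.univ_inter]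
  simp only [locMat, of_apply, if_neg hv, mul_zero, sub_zero, hS, Finset.mul_sum,
    ← Finset.sum_add_distrib]
  exact Finset.sum_congr rfl fun u _ => by ring

theorem locVal_pump_vertex_not_in_S_general
    (p r : ∀ v : V, K v → L v → V → ℝ)
    (hp0 : ∀ v k l u, 0 ≤ p v k l u)
    (x : V → ℝ) (S : Finset V) (δ : ℝ) (hδ : 0 ≤ δ) (v : V) (hv : v ∉ S) :
    locVal p r x v ≤ locVal p r (fun u => x u - δ * (if u ∈ S then 1 else 0)) v ∧
    locVal p r (fun u => x u - δ * (if u ∈ S then 1 else 0)) v ≤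
      locVal p r x v +
        δ * ((Finset.univ : Finset (K v × L v)).sup' Finset.univ_nonempty
          (fun kl => ∑ u ∈ S, p v kl.1 kl.2 u)) := by
  have hshift := locMat_sub_mul_indicator_apply p r x S δ hv
  constructor
  · refine matVal_mono fun k l => ?_
    rw [hshift]
    exact le_add_of_nonneg_right (mul_nonneg hδ (Finset.sum_nonneg fun u _ => hp0 v k l u))
  · refine matVal_le_add fun k l => ?_
    rw [hshift]
    gcongr
    exact Finset.le_sup' (fun kl : K v × L v => ∑ u ∈ S, p v kl.1 kl.2 u) (Finset.mem_univ (k, l))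

/-- for every potential `x`, subset `S ⊆ V`, `δ ≥ 0` and `v ∉ S`:
`m^v(x) ≤ m^v(x − δ e_S) ≤ m^v(x) + δ · max_{k,ℓ} ∑_{u ∈ S} p^{vu}_{kℓ}`. -/
theorem locVal_pump_vertex_not_in_S
    (p r : ∀ v : V, K v → L v → V → ℝ)
    (hp0 : ∀ v k l u, 0 ≤ p v k l u) (hp1 : ∀ v k l, ∑ u, p v k l u = 1)
    (x : V → ℝ) (S : Finset V) (δ : ℝ) (hδ : 0 ≤ δ) (v : V) (hv : v ∉ S) :
    locVal p r x v ≤ locVal p r (fun u => x u - δ * (if u ∈ S then 1 else 0)) v ∧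
    locVal p r (fun u => x u - δ * (if u ∈ S then 1 else 0)) v ≤
      locVal p r x v +
        δ * ((Finset.univ : Finset (K v × L v)).sup' Finset.univ_nonempty
          (fun kl => ∑ u ∈ S, p v kl.1 kl.2 u)) :=
  locVal_pump_vertex_not_in_S_general p r hp0 x S δ hδ v hv
end

section
/- For the pumping sequence (x_τ)_{τ≥0} defined from any initial x_0 ∈ ℝ^V, the top and bottom sets are monotone: T_{τ+1} ⊆ T_τ and B_{τ+1} ⊆ B_τ for every τ ≥ 0; consequently M_τ := V ∖ (T_τ ∪ B_τ) satisfies M_{τ+1} ⊇ M_τ. -/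
/-! Lowering the potentials on `P_τ` by `δ` moves every value `m^v` by at most `δ`. A vertex of
`T_{τ+1}` therefore already had value at least `m⁻ + 2δ`, so it lay in `P_τ`, whose values can only
decrease; symmetrically a vertex of `B_{τ+1}` had value below `m⁻ + 2δ`, so it lay outside `P_τ`,
whose values can only increase. -/

namespace Pumping

variable {V : Type*}

noncomputable def lower (S : Set V) (δ : ℝ) (x : V → ℝ) : V → ℝ :=
  fun u => x u - δ * S.indicator 1 u

@[simp]
theorem lower_zero (S : Set V) (x : V → ℝ) : lower S 0 x = x := by
  ext u
  simp [lower]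

variable (m : V → (V → ℝ) → ℝ) {S : Set V} {δ : ℝ} {x : V → ℝ} {v : V}

theorem apply_lower_le_of_mem
    (h_i : AntitoneOn (fun δ : ℝ => m v (lower S δ x)) (Set.Ici 0)) (hδ : 0 ≤ δ) :
    m v (lower S δ x) ≤ m v x := by
  simpa using h_i Set.self_mem_Ici hδ hδ

theorem le_apply_lower_of_notMem
    (h_ii : MonotoneOn (fun δ : ℝ => m v (lower S δ x)) (Set.Ici 0)) (hδ : 0 ≤ δ) :
    m v x ≤ m v (lower S δ x) := by
  simpa using h_ii Set.self_mem_Ici hδ hδ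

theorem le_apply_of_le_apply_lower {c t : ℝ} (hS : S = {u | c ≤ m u x})
    (h_i : v ∈ S → AntitoneOn (fun δ : ℝ => m v (lower S δ x)) (Set.Ici 0))
    (h_iii : |m v x - m v (lower S δ x)| ≤ δ) (hδ : 0 ≤ δ) (hct : c + δ ≤ t)
    (hv : t ≤ m v (lower S δ x)) : t ≤ m v x := by
  have hvS : v ∈ S := by
    rw [hS]
    show c ≤ m v x
    linarith [(abs_le.mp h_iii).1]
  linarith [apply_lower_le_of_mem m (h_i hvS) hδ]

theorem apply_lt_of_apply_lower_lt {c b : ℝ} (hS : S = {u | c ≤ m u x})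
    (h_ii : v ∉ S → MonotoneOn (fun δ : ℝ => m v (lower S δ x)) (Set.Ici 0))
    (h_iii : |m v x - m v (lower S δ x)| ≤ δ) (hδ : 0 ≤ δ) (hbc : b + δ ≤ c)
    (hv : m v (lower S δ x) < b) : m v x < b := by
  have hvS : v ∉ S := by
    rw [hS]
    intro hc
    change c ≤ m v x at hc
    linarith [(abs_le.mp h_iii).2]
  linarith [le_apply_lower_of_notMem m (h_ii hvS) hδ]

end Pumping

open Pumping in
theorem pumping_top_bottom_monotone_general
    {V : Type*} [Fintype V] [Nonempty V]
    (m : V → (V → ℝ) → ℝ)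
    (h_i : ∀ (x : V → ℝ) (S : Set V), ∀ v ∈ S,
      AntitoneOn (fun δ : ℝ => m v (fun u => x u - δ * S.indicator 1 u)) (Set.Ici 0))
    (h_ii : ∀ (x : V → ℝ) (S : Set V), ∀ v ∉ S,
      MonotoneOn (fun δ : ℝ => m v (fun u => x u - δ * S.indicator 1 u)) (Set.Ici 0))
    (h_iii : ∀ (x : V → ℝ) (S : Set V) (δ : ℝ), 0 ≤ δ → ∀ v,
      |m v x - m v (fun u => x u - δ * S.indicator 1 u)| ≤ δ)
    (x0 : V → ℝ) (mlo mhi δ : ℝ)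
    (hmlo : mlo = Finset.univ.inf' Finset.univ_nonempty fun v => m v x0)
    (hmhi : mhi = Finset.univ.sup' Finset.univ_nonempty fun v => m v x0)
    (hδ : δ = (mhi - mlo) / 4)
    (x : ℕ → V → ℝ)
    (P T B M : ℕ → Set V)
    (hP : ∀ τ, P τ = {v | mlo + 2 * δ ≤ m v (x τ)})
    (hx : ∀ τ, x (τ + 1) = fun u => x τ u - δ * (P τ).indicator 1 u)
    (hT : ∀ τ, T τ = {v | mlo + 3 * δ ≤ m v (x τ)})
    (hB : ∀ τ, B τ = {v | m v (x τ) < mlo + δ})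
    (hM : ∀ τ, M τ = (T τ ∪ B τ)ᶜ) :
    ∀ τ, T (τ + 1) ⊆ T τ ∧ B (τ + 1) ⊆ B τ ∧ M τ ⊆ M (τ + 1) := by
  have hδ0 : 0 ≤ δ := by
    have hv := Finset.mem_univ (Classical.arbitrary V)
    have : mlo ≤ mhi :=
      hmlo ▸ hmhi ▸ (Finset.inf'_le _ hv).trans (Finset.le_sup' (fun v => m v x0) hv)
    rw [hδ]
    linarith
  intro τ
  have hstep : x (τ + 1) = lower (P τ) δ (x τ) := hx τ
  have hT_sub : T (τ + 1) ⊆ T τ := fun v hv => by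
    rw [hT] at hv ⊢
    rw [hstep] at hv
    exact le_apply_of_le_apply_lower m (hP τ) (h_i _ _ v) (h_iii _ _ δ hδ0 v) hδ0
      (by linarith) hv
  have hB_sub : B (τ + 1) ⊆ B τ := fun v hv => by
    rw [hB] at hv ⊢
    rw [hstep] at hv
    exact apply_lt_of_apply_lower_lt m (hP τ) (h_ii _ _ v) (h_iii _ _ δ hδ0 v) hδ0
      (by linarith) hv
  refine ⟨hT_sub, hB_sub, ?_⟩
  rw [hM, hM]
  exact Set.compl_subset_compl.mpr (Set.union_subset_union hT_sub hB_sub)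

/-- along the pumping sequence the top and bottom sets are
monotone: `T_{τ+1} ⊆ T_τ`, `B_{τ+1} ⊆ B_τ`, and hence
`M_τ = V ∖ (T_τ ∪ B_τ)` satisfies `M_τ ⊆ M_{τ+1}`. -/
theorem pumping_top_bottom_monotone
    {V : Type*} [Fintype V] [Nonempty V]
    (m : V → (V → ℝ) → ℝ)
    (h_i : ∀ (x : V → ℝ) (S : Set V), ∀ v ∈ S,
      AntitoneOn (fun δ : ℝ => m v (fun u => x u - δ * S.indicator 1 u)) (Set.Ici 0))
    (h_ii : ∀ (x : V → ℝ) (S : Set V), ∀ v ∉ S,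
      MonotoneOn (fun δ : ℝ => m v (fun u => x u - δ * S.indicator 1 u)) (Set.Ici 0))
    (h_iii : ∀ (x : V → ℝ) (S : Set V) (δ : ℝ), 0 ≤ δ → ∀ v,
      |m v x - m v (fun u => x u - δ * S.indicator 1 u)| ≤ δ)
    (x0 : V → ℝ) (mlo mhi δ : ℝ)
    (hmlo : mlo = Finset.univ.inf' Finset.univ_nonempty fun v => m v x0)
    (hmhi : mhi = Finset.univ.sup' Finset.univ_nonempty fun v => m v x0)
    (hδ : δ = (mhi - mlo) / 4)
    (x : ℕ → V → ℝ) (hx0 : x 0 = x0)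
    (P T B M : ℕ → Set V)
    (hP : ∀ τ, P τ = {v | mlo + 2 * δ ≤ m v (x τ)})
    (hx : ∀ τ, x (τ + 1) = fun u => x τ u - δ * (P τ).indicator 1 u)
    (hT : ∀ τ, T τ = {v | mlo + 3 * δ ≤ m v (x τ)})
    (hB : ∀ τ, B τ = {v | m v (x τ) < mlo + δ})
    (hM : ∀ τ, M τ = (T τ ∪ B τ)ᶜ) :
    ∀ τ, T (τ + 1) ⊆ T τ ∧ B (τ + 1) ⊆ B τ ∧ M τ ⊆ M (τ + 1) :=
  pumping_top_bottom_monotone_general m h_i h_ii h_iii x0 mlo mhi δ hmlo hmhi hδ x P T B M hP hx hT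
    hB hM
end

section
/- For the pumping sequence (x_τ)_{τ≥0} defined from any initial x_0 ∈ ℝ^V, either T_τ = ∅ or B_τ = ∅ for some finite τ, or there exist nonempty disjoint subsets I, F ⊆ V and a threshold τ_0 such that: T_τ ⊆ I and B_τ ⊆ F for all τ ≥ τ_0; (a) for all τ ≥ τ_0, m^v(x_τ) ≥ m⁻ + 2δ for all v ∈ I and m^v(x_τ) < m⁻ + 2δ for all v ∈ F; and for every real Δ ≥ 0 there exists a finite index τ(Δ) ≥ τ_0 such that for all τ ≥ τ(Δ): (b) x_τ^u − x_τ^v ≥ Δ for all v ∈ I and u ∉ I, and (c) x_τ^v − x_τ^u ≥ Δ for all v ∈ F and u ∉ F. -/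
/-!
A vertex outside the pumped set `P_τ` has `m^v < m⁻ + 2δ` and moves by at most `δ`, so it cannot
enter `T_{τ+1}`, while a pumped vertex only loses value; dually for `B_τ`. Hence `T_τ` and `B_τ`
decrease and, `V` being finite, stabilize. Take `I` (resp. `F`) to be the vertices that are
eventually always (resp. never) pumped, the `liminf` of `P_τ` (resp. of its complement); the
stable `T_τ` lies in `I` and the stable `B_τ` in `F`. Past some time every vertex of `I` is pumped
at each step, while a vertex `u ∉ I` is left alone infinitely often, so `x^u - x^v` never
decreases and grows by `δ` infinitely often; it therefore diverges. The same holds for `F`.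
If `δ ≤ 0`, then `B_0 = ∅` because `m⁻` is a minimum.
-/

open Filter Topology

lemma Antitone.eventually_subset_liminf {V : Type*} [Finite V] {S Q : ℕ → Set V}
    (hS : Antitone S) (hSQ : ∀ n, S n ⊆ Q n) : ∀ᶠ n in atTop, S n ⊆ liminf Q atTop := by
  obtain ⟨N, hN⟩ := WellFoundedLT.antitone_chain_condition hS
  filter_upwards [eventually_ge_atTop N] with n hn v hv
  refine mem_liminf_iff_eventually_mem.2 ?_
  filter_upwards [eventually_ge_atTop N] with k hk
  exact hSQ k (by rwa [← hN k hk, hN n hn])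

lemma eventually_liminf_subset {ι V : Type*} [Finite V] {f : Filter ι} (s : ι → Set V) :
    ∀ᶠ i in f, liminf s f ⊆ s i :=
  (liminf s f).toFinite.eventually_all.2 fun _ hv => mem_liminf_iff_eventually_mem.1 hv

lemma tendsto_atTop_of_eventually_le_succ_of_frequently_add_le {g : ℕ → ℝ} {δ : ℝ} (hδ : 0 < δ)
    (hmono : ∀ᶠ n in atTop, g n ≤ g (n + 1)) (hjump : ∃ᶠ n in atTop, g n + δ ≤ g (n + 1)) :
    Tendsto g atTop atTop := by
  obtain ⟨N, hN⟩ := eventually_atTop.1 hmono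
  have hshift : Monotone fun n => g (n + N) :=
    monotone_nat_of_le_succ fun n => by rw [Nat.add_right_comm]; exact hN _ (by omega)
  rcases tendsto_atTop_of_monotone hshift with h | ⟨l, hl⟩
  · exact (tendsto_add_atTop_iff_nat N).1 h
  have hconv : Tendsto g atTop (𝓝 l) := (tendsto_add_atTop_iff_nat N).1 hl
  have hsmall : ∀ᶠ n in atTop, g (n + 1) - g n < δ := by
    have hdiff := ((tendsto_add_atTop_iff_nat 1).2 hconv).sub hconv
    rw [sub_self] at hdiff
    exact hdiff.eventually (eventually_lt_nhds hδ)
  obtain ⟨n, hjump, hsmall⟩ := (hjump.and_eventually hsmall).exists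
  linarith

section Pumping

variable {V : Type*} {m : V → (V → ℝ) → ℝ} {x : ℕ → V → ℝ} {P : ℕ → Set V} {c t δ : ℝ}

lemma antitone_setOf_le_of_pumping (hP : ∀ τ, P τ = {v | c ≤ m v (x τ)})
    (hx : ∀ τ, x (τ + 1) = fun u => x τ u - δ * (P τ).indicator 1 u)
    (h_i : ∀ (y : V → ℝ) (S : Set V), ∀ v ∈ S,
      AntitoneOn (fun δ : ℝ => m v (fun u => y u - δ * S.indicator 1 u)) (Set.Ici 0))
    (h_iii : ∀ (y : V → ℝ) (S : Set V) (δ : ℝ), 0 ≤ δ → ∀ v,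
      |m v y - m v (fun u => y u - δ * S.indicator 1 u)| ≤ δ)
    (hδ : 0 ≤ δ) (ht : c + δ ≤ t) : Antitone fun τ => {v | t ≤ m v (x τ)} := by
  refine antitone_nat_of_succ_le fun τ v hv => ?_
  simp only [Set.mem_ofPred_eq] at hv ⊢
  rw [hx] at hv
  by_cases hvP : v ∈ P τ
  · have hdec := h_i (x τ) (P τ) v hvP Set.self_mem_Ici hδ hδ
    simp only [zero_mul, sub_zero] at hdec
    exact hv.trans hdec
  · rw [hP, Set.mem_ofPred_eq, not_le] at hvP
    linarith [(abs_le.1 (h_iii (x τ) (P τ) δ hδ v)).1]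

lemma antitone_setOf_lt_of_pumping (hP : ∀ τ, P τ = {v | c ≤ m v (x τ)})
    (hx : ∀ τ, x (τ + 1) = fun u => x τ u - δ * (P τ).indicator 1 u)
    (h_ii : ∀ (y : V → ℝ) (S : Set V), ∀ v ∉ S,
      MonotoneOn (fun δ : ℝ => m v (fun u => y u - δ * S.indicator 1 u)) (Set.Ici 0))
    (h_iii : ∀ (y : V → ℝ) (S : Set V) (δ : ℝ), 0 ≤ δ → ∀ v,
      |m v y - m v (fun u => y u - δ * S.indicator 1 u)| ≤ δ)
    (hδ : 0 ≤ δ) (ht : t ≤ c - δ) : Antitone fun τ => {v | m v (x τ) < t} := by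
  refine antitone_nat_of_succ_le fun τ v hv => ?_
  simp only [Set.mem_ofPred_eq] at hv ⊢
  rw [hx] at hv
  by_cases hvP : v ∈ P τ
  · rw [hP, Set.mem_ofPred_eq] at hvP
    linarith [(abs_le.1 (h_iii (x τ) (P τ) δ hδ v)).2]
  · have hinc := h_ii (x τ) (P τ) v hvP Set.self_mem_Ici hδ hδ
    simp only [zero_mul, sub_zero] at hinc
    exact hinc.trans_lt hv

lemma tendsto_atTop_sub_of_pumping (hδ : 0 < δ)
    (hx : ∀ τ, x (τ + 1) = fun u => x τ u - δ * (P τ).indicator 1 u) {a b : V}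
    (hmono : ∀ᶠ τ in atTop, a ∈ P τ → b ∈ P τ) (hjump : ∃ᶠ τ in atTop, a ∉ P τ ∧ b ∈ P τ) :
    Tendsto (fun τ => x τ a - x τ b) atTop atTop := by
  have hstep : ∀ τ, x (τ + 1) a - x (τ + 1) b =
      x τ a - x τ b + δ * ((P τ).indicator 1 b - (P τ).indicator 1 a) := fun τ => by
    rw [hx]; ring
  refine tendsto_atTop_of_eventually_le_succ_of_frequently_add_le hδ
    (hmono.mono fun τ hab => ?_) (hjump.mono fun τ ⟨ha, hb⟩ => ?_)
  · rw [hstep]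
    by_cases ha : a ∈ P τ
    · simp [ha, hab ha]
    · by_cases hb : b ∈ P τ <;> simp [ha, hb, hδ.le]
  · simp [hstep, ha, hb]

lemma eventually_le_sub_of_pumping [Finite V] (hδ : 0 < δ)
    (hx : ∀ τ, x (τ + 1) = fun u => x τ u - δ * (P τ).indicator 1 u) (Δ : ℝ) :
    ∀ᶠ τ in atTop,
      (∀ v ∈ liminf P atTop, ∀ u ∉ liminf P atTop, Δ ≤ x τ u - x τ v) ∧
      (∀ v ∈ liminf (fun τ => (P τ)ᶜ) atTop, ∀ u ∉ liminf (fun τ => (P τ)ᶜ) atTop,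
        Δ ≤ x τ v - x τ u) := by
  set I := liminf P atTop
  set F := liminf (fun τ => (P τ)ᶜ) atTop
  refine .and (I.toFinite.eventually_all.2 fun v hv => Iᶜ.toFinite.eventually_all.2 fun u hu =>
      (tendsto_atTop_sub_of_pumping hδ hx ?_ ?_).eventually_ge_atTop Δ)
    (F.toFinite.eventually_all.2 fun v hv => Fᶜ.toFinite.eventually_all.2 fun u hu =>
      (tendsto_atTop_sub_of_pumping hδ hx ?_ ?_).eventually_ge_atTop Δ) <;>
    rw [mem_liminf_iff_eventually_mem] at hv <;>
    rw [Set.mem_compl_iff, mem_liminf_iff_eventually_mem, not_eventually] at hu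
  · exact hv.mono fun _ hvP _ => hvP
  · exact hu.and_eventually hv
  · exact hv.mono fun _ hvP hvP' => absurd hvP' hvP
  · exact (hu.and_eventually hv).mono fun _ h => ⟨h.2, Set.notMem_compl_iff.1 h.1⟩

end Pumping

theorem pumping_dichotomy_general
    {V : Type*} [Fintype V] [Nonempty V]
    (m : V → (V → ℝ) → ℝ)
    (h_i : ∀ (x : V → ℝ) (S : Set V), ∀ v ∈ S,
      AntitoneOn (fun δ : ℝ => m v (fun u => x u - δ * S.indicator 1 u)) (Set.Ici 0))
    (h_ii : ∀ (x : V → ℝ) (S : Set V), ∀ v ∉ S,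
      MonotoneOn (fun δ : ℝ => m v (fun u => x u - δ * S.indicator 1 u)) (Set.Ici 0))
    (h_iii : ∀ (x : V → ℝ) (S : Set V) (δ : ℝ), 0 ≤ δ → ∀ v,
      |m v x - m v (fun u => x u - δ * S.indicator 1 u)| ≤ δ)
    (x0 : V → ℝ) (mlo δ : ℝ)
    (hmlo : mlo = Finset.univ.inf' Finset.univ_nonempty fun v => m v x0)
    (x : ℕ → V → ℝ) (hx0 : x 0 = x0)
    (P T B : ℕ → Set V)
    (hP : ∀ τ, P τ = {v | mlo + 2 * δ ≤ m v (x τ)})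
    (hx : ∀ τ, x (τ + 1) = fun u => x τ u - δ * (P τ).indicator 1 u)
    (hT : ∀ τ, T τ = {v | mlo + 3 * δ ≤ m v (x τ)})
    (hB : ∀ τ, B τ = {v | m v (x τ) < mlo + δ}) :
    (∃ τ, T τ = ∅ ∨ B τ = ∅) ∨
    ∃ (I F : Set V) (τ0 : ℕ), I.Nonempty ∧ F.Nonempty ∧ Disjoint I F ∧
      (∀ τ ≥ τ0, T τ ⊆ I ∧ B τ ⊆ F ∧
        (∀ v ∈ I, mlo + 2 * δ ≤ m v (x τ)) ∧
        (∀ v ∈ F, m v (x τ) < mlo + 2 * δ)) ∧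
      (∀ Δ : ℝ, 0 ≤ Δ → ∃ τΔ, τ0 ≤ τΔ ∧ ∀ τ ≥ τΔ,
        (∀ v ∈ I, ∀ u ∉ I, Δ ≤ x τ u - x τ v) ∧
        (∀ v ∈ F, ∀ u ∉ F, Δ ≤ x τ v - x τ u)) := by
  rcases le_or_gt δ 0 with hδ | hδ
  · refine Or.inl ⟨0, Or.inr (Set.eq_empty_of_forall_notMem fun v hv => ?_)⟩
    have hmin : mlo ≤ m v (x 0) := hmlo ▸ hx0 ▸ Finset.inf'_le _ (Finset.mem_univ v)
    rw [hB, Set.mem_ofPred_eq] at hv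
    linarith
  by_cases hTB : ∃ τ, T τ = ∅ ∨ B τ = ∅
  · exact Or.inl hTB
  push Not at hTB
  have hTI : ∀ᶠ τ in atTop, T τ ⊆ liminf P atTop := by
    refine (funext hT ▸ antitone_setOf_le_of_pumping hP hx h_i h_iii hδ.le (by linarith) :
      Antitone T).eventually_subset_liminf fun τ => ?_
    rw [hT, hP]
    exact Set.ofPred_subset_ofPred.2 fun v hv => by linarith
  have hBF : ∀ᶠ τ in atTop, B τ ⊆ liminf (fun τ => (P τ)ᶜ) atTop := by
    refine (funext hB ▸ antitone_setOf_lt_of_pumping hP hx h_ii h_iii hδ.le (by linarith) :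
      Antitone B).eventually_subset_liminf fun τ => ?_
    rw [hB, hP, Set.compl_ofPred]
    exact Set.ofPred_subset_ofPred.2 fun v hv => by linarith
  obtain ⟨τ0, hτ0⟩ := eventually_atTop.1 <| hTI.and <| hBF.and <|
    (eventually_liminf_subset P).and (eventually_liminf_subset fun τ => (P τ)ᶜ)
  obtain ⟨hT0, hB0, hI0, hF0⟩ := hτ0 τ0 le_rfl
  refine Or.inr ⟨_, _, τ0, (hTB τ0).1.mono hT0, (hTB τ0).2.mono hB0,
    Set.disjoint_left.2 fun v hvI hvF => hF0 hvF (hI0 hvI), fun τ hτ => ?_, fun Δ _ => ?_⟩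
  · obtain ⟨hTτ, hBτ, hIτ, hFτ⟩ := hτ0 τ hτ
    exact ⟨hTτ, hBτ, fun v hv => by simpa [hP] using hIτ hv,
      fun v hv => by simpa [hP] using hFτ hv⟩
  · obtain ⟨N, hN⟩ := eventually_atTop.1 (eventually_le_sub_of_pumping hδ hx Δ)
    exact ⟨max τ0 N, le_max_left _ _, fun τ hτ => hN τ (le_of_max_le_right hτ)⟩

/-- along the pumping sequence, either `T_τ = ∅` or `B_τ = ∅` for
some finite `τ`, or there are nonempty disjoint sets `I ⊇ T_τ`, `F ⊇ B_τ` and a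
threshold `τ₀` such that (a) for all `τ ≥ τ₀`, `m^v(x_τ) ≥ m⁻ + 2δ` on `I` and
`m^v(x_τ) < m⁻ + 2δ` on `F`, and for every `Δ ≥ 0` there is `τ(Δ) ≥ τ₀` with
(b) `x_τ^u − x_τ^v ≥ Δ` for `v ∈ I`, `u ∉ I` and (c) `x_τ^v − x_τ^u ≥ Δ` for
`v ∈ F`, `u ∉ F`, for all `τ ≥ τ(Δ)`. -/
theorem pumping_dichotomy
    {V : Type*} [Fintype V] [Nonempty V]
    (m : V → (V → ℝ) → ℝ)
    (h_i : ∀ (x : V → ℝ) (S : Set V), ∀ v ∈ S,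
      AntitoneOn (fun δ : ℝ => m v (fun u => x u - δ * S.indicator 1 u)) (Set.Ici 0))
    (h_ii : ∀ (x : V → ℝ) (S : Set V), ∀ v ∉ S,
      MonotoneOn (fun δ : ℝ => m v (fun u => x u - δ * S.indicator 1 u)) (Set.Ici 0))
    (h_iii : ∀ (x : V → ℝ) (S : Set V) (δ : ℝ), 0 ≤ δ → ∀ v,
      |m v x - m v (fun u => x u - δ * S.indicator 1 u)| ≤ δ)
    (x0 : V → ℝ) (mlo mhi δ : ℝ)
    (hmlo : mlo = Finset.univ.inf' Finset.univ_nonempty fun v => m v x0)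
    (hmhi : mhi = Finset.univ.sup' Finset.univ_nonempty fun v => m v x0)
    (hδ : δ = (mhi - mlo) / 4)
    (x : ℕ → V → ℝ) (hx0 : x 0 = x0)
    (P T B : ℕ → Set V)
    (hP : ∀ τ, P τ = {v | mlo + 2 * δ ≤ m v (x τ)})
    (hx : ∀ τ, x (τ + 1) = fun u => x τ u - δ * (P τ).indicator 1 u)
    (hT : ∀ τ, T τ = {v | mlo + 3 * δ ≤ m v (x τ)})
    (hB : ∀ τ, B τ = {v | m v (x τ) < mlo + δ}) :
    (∃ τ, T τ = ∅ ∨ B τ = ∅) ∨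
    ∃ (I F : Set V) (τ0 : ℕ), I.Nonempty ∧ F.Nonempty ∧ Disjoint I F ∧
      (∀ τ ≥ τ0, T τ ⊆ I ∧ B τ ⊆ F ∧
        (∀ v ∈ I, mlo + 2 * δ ≤ m v (x τ)) ∧
        (∀ v ∈ F, m v (x τ) < mlo + 2 * δ)) ∧
      (∀ Δ : ℝ, 0 ≤ Δ → ∃ τΔ, τ0 ≤ τΔ ∧ ∀ τ ≥ τΔ,
        (∀ v ∈ I, ∀ u ∉ I, Δ ≤ x τ u - x τ v) ∧
        (∀ v ∈ F, ∀ u ∉ F, Δ ≤ x τ v - x τ u)) :=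
  pumping_dichotomy_general m h_i h_ii h_iii x0 mlo δ hmlo x hx0 P T B hP hx hT hB
end

section
/- Let t ≥ 1 be an integer and let R > 0 and c > 0 be reals with c·R ≥ 1. Suppose the nonnegative reals Δ_1, …, Δ_t satisfy Δ_i ≤ c·(R + ∑_{j=1}^{i−1} Δ_j)² for every i = 1, …, t (the empty sum being 0). Then ∑_{i=1}^{t} Δ_i ≤ (t·c·R)^{2^t − 1} · t² · R. -/
/-! The shifted partial sums `S i = R + ∑_{j ≤ i} Δ_j` start at `R` and satisfy
`S (i+1) ≤ S i + c S_i² ≤ 2c S_i²`, because `c S_i ≥ c R ≥ 1`. A squaring recurrence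
`S (i+1) ≤ K S_i²` with `S 0 ≤ R` is solved exactly by `(K R)^(2^i - 1) R`, and for `t ≥ 2`
the base `2cR` is at most `tcR`. -/

open Finset

theorem le_pow_two_pow_sub_one_mul_of_le_mul_sq {S : ℕ → ℝ} {K R : ℝ} (hK : 0 ≤ K) :
    ∀ {n : ℕ}, (∀ i ≤ n, 0 ≤ S i) → S 0 ≤ R → (∀ i < n, S (i + 1) ≤ K * S i ^ 2) →
      S n ≤ (K * R) ^ (2 ^ n - 1) * R
  | 0, _, h0, _ => by simpa using h0
  | n + 1, hS, h0, hstep => by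
    have ih : S n ≤ (K * R) ^ (2 ^ n - 1) * R :=
      le_pow_two_pow_sub_one_mul_of_le_mul_sq hK (fun i hi => hS i (by omega)) h0
        (fun i hi => hstep i (by omega))
    have hexp : 2 ^ (n + 1) - 1 = 2 * (2 ^ n - 1) + 1 := by
      have := Nat.one_le_two_pow (n := n)
      rw [pow_succ]
      omega
    calc S (n + 1) ≤ K * S n ^ 2 := hstep n n.lt_succ_self
      _ ≤ K * ((K * R) ^ (2 ^ n - 1) * R) ^ 2 := by
        gcongr
        exact hS n n.le_succ
      _ = (K * R) ^ (2 ^ (n + 1) - 1) * R := by rw [hexp]; ring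

theorem add_le_two_mul_mul_sq {c S d : ℝ} (hS : 0 ≤ S) (hcS : 1 ≤ c * S)
    (hd : d ≤ c * S ^ 2) : S + d ≤ 2 * c * S ^ 2 := by
  nlinarith [mul_le_mul_of_nonneg_left hcS hS]

/-- the recurrence bound for consecutive potential gaps in the
pumping algorithm. If `Δ_1, …, Δ_t ≥ 0` satisfy
`Δ_i ≤ c (R + ∑_{j<i} Δ_j)²` for all `i`, with `R, c > 0` and `cR ≥ 1`, then
`∑_{i=1}^t Δ_i ≤ (t c R)^{2^t − 1} · t² · R`. -/
theorem pumping_gap_recurrence_bound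
    (t : ℕ) (ht : 1 ≤ t) (R c : ℝ) (hR : 0 < R) (hc : 0 < c) (hcR : 1 ≤ c * R)
    (Δ : ℕ → ℝ) (hΔ0 : ∀ i, 1 ≤ i → i ≤ t → 0 ≤ Δ i)
    (hrec : ∀ i, 1 ≤ i → i ≤ t →
      Δ i ≤ c * (R + ∑ j ∈ Finset.Icc 1 (i - 1), Δ j) ^ 2) :
    ∑ i ∈ Finset.Icc 1 t, Δ i ≤ ((t : ℝ) * c * R) ^ (2 ^ t - 1) * (t : ℝ) ^ 2 * R := by
  set S : ℕ → ℝ := fun i => R + ∑ j ∈ Icc 1 i, Δ j with hSdef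
  have hRS : ∀ i ≤ t, R ≤ S i := fun i hi =>
    le_add_of_nonneg_right <| sum_nonneg fun j hj =>
      hΔ0 j (mem_Icc.1 hj).1 ((mem_Icc.1 hj).2.trans hi)
  have hstep : ∀ i < t, S (i + 1) ≤ 2 * c * S i ^ 2 := fun i hi => by
    have hΔ := hrec (i + 1) (by omega) hi
    rw [Nat.add_sub_cancel] at hΔ
    have hRSi := hRS i hi.le
    simp only [hSdef, sum_Icc_succ_top (by omega : 1 ≤ i + 1), ← add_assoc]
    exact add_le_two_mul_mul_sq (hR.le.trans hRSi) (hcR.trans (by gcongr)) hΔ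
  have hgrowth : S t ≤ (2 * c * R) ^ (2 ^ t - 1) * R :=
    le_pow_two_pow_sub_one_mul_of_le_mul_sq (by positivity)
      (fun i hi => hR.le.trans (hRS i hi)) (by simp [hSdef]) hstep
  obtain rfl | ht2 := ht.eq_or_lt
  · simpa [sq, mul_assoc] using hrec 1 le_rfl le_rfl
  · have ht2' : (2 : ℝ) ≤ t := by exact_mod_cast ht2
    calc ∑ i ∈ Icc 1 t, Δ i = S t - R := by ring
      _ ≤ (2 * c * R) ^ (2 ^ t - 1) * R := by linarith
      _ ≤ (t * c * R) ^ (2 ^ t - 1) * R := by gcongr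
      _ ≤ (t * c * R) ^ (2 ^ t - 1) * t ^ 2 * R := by
        gcongr
        exact le_mul_of_one_le_right (by positivity) (one_le_pow₀ (by linarith : (1 : ℝ) ≤ t))
end

section
/- Let K, L be finite nonempty sets, A ∈ ℝ^{K×L} a matrix all of whose entries are at most R, and let ε, b' be reals with 0 < ε < b'. Let K̄ ⊆ K be a subset such that for every k ∉ K̄ the uniform row average satisfies (1/|L|)·∑_{ℓ∈L} a_{kℓ} ≤ R − R²/ε. Suppose α ∈ Δ(K) satisfies min_{β∈Δ(L)} αᵀAβ ≥ b'. Then R > ε, K̄ is nonempty, and ∑_{k∉K̄} α_k < ε/R. -/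
/-! Play `α` against the uniform strategy on `L`. Every row then pays at most `R`, and rows outside
`K̄` pay at least `R²/ε` less, so `b' ≤ R - (R²/ε) · α(K̄ᶜ)`. This forces `R ≥ b' > ε` and
`α(K̄ᶜ) < ε/R < 1`, so `α` puts mass on `K̄`. -/

open Finset

theorem Finset.sum_mul_le_sub_mul_sum_compl {ι 𝕜 : Type*} [Fintype ι] [DecidableEq ι]
    [CommRing 𝕜] [PartialOrder 𝕜] [IsOrderedRing 𝕜]
    (s : Finset ι) {α f : ι → 𝕜} {R c : 𝕜} (hα : ∀ k, 0 ≤ α k) (hf : ∀ k, f k ≤ R)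
    (hfc : ∀ k ∉ s, f k ≤ R - c) :
    ∑ k, α k * f k ≤ (∑ k, α k) * R - c * ∑ k ∈ sᶜ, α k := by
  calc ∑ k, α k * f k = ∑ k, α k * R - ∑ k, α k * (R - f k) := by
        rw [← sum_sub_distrib]; exact sum_congr rfl fun k _ => by ring
    _ ≤ ∑ k, α k * R - ∑ k ∈ sᶜ, α k * c := by
        gcongr
        calc ∑ k ∈ sᶜ, α k * c ≤ ∑ k ∈ sᶜ, α k * (R - f k) :=
              sum_le_sum fun k hk => mul_le_mul_of_nonneg_left
                (le_sub_comm.mp (hfc k (mem_compl.mp hk))) (hα k)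
          _ ≤ ∑ k, α k * (R - f k) :=
              sum_le_sum_of_subset_of_nonneg (subset_univ _) fun k _ _ =>
                mul_nonneg (hα k) (sub_nonneg.mpr (hf k))
    _ = (∑ k, α k) * R - c * ∑ k ∈ sᶜ, α k := by rw [sum_mul, mul_sum]; simp only [mul_comm]

theorem one_div_card_mul_sum_le {L 𝕜 : Type*} [Fintype L] [Nonempty L]
    [Field 𝕜] [LinearOrder 𝕜] [IsStrictOrderedRing 𝕜] {a : L → 𝕜} {R : 𝕜} (ha : ∀ l, a l ≤ R) :
    1 / (Fintype.card L : 𝕜) * ∑ l, a l ≤ R := by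
  rw [one_div_mul_eq_div, ← Fintype.expect_eq_sum_div_card]
  exact expect_le univ_nonempty fun l _ => ha l

theorem sum_sum_mul_barycenter {K L 𝕜 : Type*} [Fintype K] [Fintype L] [Nonempty L]
    [Field 𝕜] [LinearOrder 𝕜] [IsStrictOrderedRing 𝕜] (A : Matrix K L 𝕜) (α : K → 𝕜) :
    ∑ k, ∑ l, α k * A k l * (stdSimplex.barycenter : stdSimplex 𝕜 L).val l
      = ∑ k, α k * (1 / (Fintype.card L : 𝕜) * ∑ l, A k l) := by
  simp only [stdSimplex.barycenter_apply, mul_sum, one_div]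
  exact sum_congr rfl fun k _ => sum_congr rfl fun l _ => by ring

theorem lt_and_lt_div_of_le_sub_sq_div_mul {𝕜 : Type*}
    [Field 𝕜] [LinearOrder 𝕜] [IsStrictOrderedRing 𝕜] {ε b' R s : 𝕜}
    (hε : 0 < ε) (hεb : ε < b') (hs : 0 ≤ s) (h : b' ≤ R - R ^ 2 / ε * s) : ε < R ∧ s < ε / R := by
  have hεR : ε < R := by nlinarith [div_nonneg (sq_nonneg R) hε.le]
  have hR : 0 < R := hε.trans hεR
  have h1 : R ^ 2 * s / ε < R - ε := by rw [mul_div_right_comm]; linarith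
  rw [div_lt_iff₀ hε] at h1
  refine ⟨hεR, ?_⟩
  rw [lt_div_iff₀ hR]; nlinarith

theorem truncation_bound_general
    {K L : Type*} [Fintype K] [Fintype L] [DecidableEq K]
    [Nonempty L]
    (A : Matrix K L ℝ) (R ε b' : ℝ)
    (hA : ∀ k l, A k l ≤ R) (hε : 0 < ε) (hεb : ε < b')
    (Kbar : Finset K)
    (hKbar : ∀ k ∉ Kbar, (1 / (Fintype.card L : ℝ)) * ∑ l, A k l ≤ R - R ^ 2 / ε)
    (α : K → ℝ) (hα : α ∈ stdSimplex ℝ K)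
    (hguar : ∀ β ∈ stdSimplex ℝ L, b' ≤ ∑ k, ∑ l, α k * A k l * β l) :
    ε < R ∧ Kbar.Nonempty ∧ ∑ k ∈ Kbarᶜ, α k < ε / R := by
  have hbound : b' ≤ R - R ^ 2 / ε * ∑ k ∈ Kbarᶜ, α k :=
    calc b' ≤ ∑ k, α k * (1 / (Fintype.card L : ℝ) * ∑ l, A k l) :=
          sum_sum_mul_barycenter A α ▸ hguar _ stdSimplex.barycenter.prop
      _ ≤ (∑ k, α k) * R - R ^ 2 / ε * ∑ k ∈ Kbarᶜ, α k :=
          Kbar.sum_mul_le_sub_mul_sum_compl hα.1 (fun k => one_div_card_mul_sum_le (hA k)) hKbar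
      _ = R - R ^ 2 / ε * ∑ k ∈ Kbarᶜ, α k := by rw [hα.2, one_mul]
  obtain ⟨hεR, hout⟩ :=
    lt_and_lt_div_of_le_sub_sq_div_mul hε hεb (sum_nonneg fun k _ => hα.1 k) hbound
  refine ⟨hεR, nonempty_iff_ne_empty.mpr ?_, hout⟩
  rintro rfl
  rw [compl_empty, hα.2] at hout
  exact ((div_lt_one (hε.trans hεR)).mpr hεR).not_gt hout

/-- the key truncation step. If all entries of `A` are at most
`R`, every row `k ∉ K̄` has uniform average at most `R − R²/ε`, and
`α ∈ Δ(K)` guarantees `αᵀAβ ≥ b' > ε > 0` against every `β ∈ Δ(L)`, then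
`R > ε`, `K̄` is nonempty, and `∑_{k ∉ K̄} α_k < ε/R`. -/
theorem truncation_bound
    {K L : Type*} [Fintype K] [Fintype L] [DecidableEq K]
    [Nonempty K] [Nonempty L]
    (A : Matrix K L ℝ) (R ε b' : ℝ)
    (hA : ∀ k l, A k l ≤ R) (hε : 0 < ε) (hεb : ε < b')
    (Kbar : Finset K)
    (hKbar : ∀ k ∉ Kbar, (1 / (Fintype.card L : ℝ)) * ∑ l, A k l ≤ R - R ^ 2 / ε)
    (α : K → ℝ) (hα : α ∈ stdSimplex ℝ K)
    (hguar : ∀ β ∈ stdSimplex ℝ L, b' ≤ ∑ k, ∑ l, α k * A k l * β l) :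
    ε < R ∧ Kbar.Nonempty ∧ ∑ k ∈ Kbarᶜ, α k < ε / R :=
  truncation_bound_general A R ε b' hA hε hεb Kbar hKbar α hα hguar
end

section
/- Let V be a finite nonempty set, Q ∈ ℝ^{V×V} a row-stochastic matrix (all entries nonnegative, every row summing to 1), and I ⊆ V a set closed under Q, i.e., Q_{vu} = 0 whenever v ∈ I and u ∉ I. Let c, x ∈ ℝ^V and b ∈ ℝ satisfy c_v + x_v − (Qx)_v ≥ b for every v ∈ I. Then for every v ∈ I: liminf_{N→∞} (1/(N+1)) ∑_{j=0}^{N} (Q^j c)_v ≥ b. -/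
open Filter Finset

/-!
Iterating `Q` transports the pointwise bound `b ≤ c + x - Q x` on the closed set `I` to
`b ≤ (Qʲ c) v + (Qʲ x) v - (Qʲ⁺¹ x) v`, because `Qʲ` is again row-stochastic and closed
on `I`.
Summing over `j ≤ N` telescopes the potential terms, so the Cesàro means of `(Qʲ c) v` are at
least `b - O(1/N)`, and `Qʲ x` stays bounded since every `Qʲ` averages.
-/

namespace Matrix

variable {n : Type*} [Fintype n] [DecidableEq n]

/-- The matrices under which `I` is closed, i.e. with no transition out of `I`. -/
def closedUnder (R : Type*) [Semiring R] (I : Set n) : Submonoid (Matrix n n R) where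
  carrier := {M | ∀ i ∈ I, ∀ j ∉ I, M i j = 0}
  mul_mem' {M N} hM hN i hi j hj := by
    refine sum_eq_zero fun k _ => show M i k * N k j = 0 from ?_
    by_cases hk : k ∈ I
    · rw [hN k hk j hj, mul_zero]
    · rw [hM i hi k hk, zero_mul]
  one_mem' i hi j hj := one_apply_ne fun h => hj (h ▸ hi)

section Ordered

variable {R : Type*} [Ring R] [PartialOrder R] [IsOrderedRing R]
  {M : Matrix n n R} {f : n → R} {b : R}

theorem le_mulVec_apply_of_mem_rowStochastic (hM : M ∈ rowStochastic R n) {i : n}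
    (hf : ∀ j, M i j ≠ 0 → b ≤ f j) : b ≤ (M *ᵥ f) i :=
  calc b = ∑ j, M i j * b := by rw [← sum_mul, sum_row_of_mem_rowStochastic hM, one_mul]
    _ ≤ ∑ j, M i j * f j := sum_le_sum fun j _ => by
        by_cases hj : M i j = 0
        · simp [hj]
        · exact mul_le_mul_of_nonneg_left (hf j hj) (nonneg_of_mem_rowStochastic hM)

theorem mulVec_apply_le_of_mem_rowStochastic (hM : M ∈ rowStochastic R n) (i : n)
    (hf : ∀ j, f j ≤ b) : (M *ᵥ f) i ≤ b := by
  have := le_mulVec_apply_of_mem_rowStochastic (f := -f) (b := -b) (i := i) hM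
    fun j _ => neg_le_neg (hf j)
  rwa [mulVec_neg, Pi.neg_apply, neg_le_neg_iff] at this

theorem le_mulVec_apply_of_mem_closedUnder {I : Set n} (hM : M ∈ rowStochastic R n)
    (hMI : M ∈ closedUnder R I) {i : n} (hi : i ∈ I) (hf : ∀ j ∈ I, b ≤ f j) :
    b ≤ (M *ᵥ f) i :=
  le_mulVec_apply_of_mem_rowStochastic hM fun j hj =>
    hf j (by_contra fun hjI => hj (hMI i hi j hjI))

end Ordered

end Matrix

noncomputable def cesaroMean (a : ℕ → ℝ) (N : ℕ) : ℝ :=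
  (1 / (N + 1 : ℝ)) * ∑ j ∈ range (N + 1), a j

section Cesaro

variable {a y : ℕ → ℝ} {b : ℝ}

theorem cesaroMean_le {A : ℝ} (ha : ∀ j, a j ≤ A) (N : ℕ) : cesaroMean a N ≤ A := by
  have hsum : ∑ j ∈ range (N + 1), a j ≤ (N + 1) * A := by
    simpa using sum_le_sum fun j (_ : j ∈ range (N + 1)) => ha j
  rw [cesaroMean, one_div, inv_mul_le_iff₀ (by positivity)]
  exact hsum

theorem le_cesaroMean_of_le_add_sub {B : ℝ} (h : ∀ j, b ≤ a j + (y j - y (j + 1)))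
    (hy : ∀ j, B ≤ y j) (N : ℕ) : b + (B - y 0) / (N + 1) ≤ cesaroMean a N := by
  have hsum : (N + 1) * b ≤ ∑ j ∈ range (N + 1), a j + (y 0 - y (N + 1)) := by
    rw [← sum_range_sub' y, ← sum_add_distrib]
    simpa using sum_le_sum fun j (_ : j ∈ range (N + 1)) => h j
  have hN : (0 : ℝ) < N + 1 := by positivity
  rw [cesaroMean, one_div, inv_mul_eq_div, le_div_iff₀ hN, add_mul, div_mul_cancel₀ _ hN.ne']
  linarith [hy (N + 1)]

theorem le_liminf_cesaroMean_of_le_add_sub (h : ∀ j, b ≤ a j + (y j - y (j + 1)))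
    (hy : BddBelow (Set.range y)) (ha : BddAbove (Set.range a)) :
    b ≤ liminf (cesaroMean a) atTop := by
  obtain ⟨B, hB⟩ := hy
  obtain ⟨A, hA⟩ := ha
  have hlower N := le_cesaroMean_of_le_add_sub h (fun j => hB (Set.mem_range_self j)) N
  have hlim : Tendsto (fun N : ℕ => b + (B - y 0) / (N + 1)) atTop (nhds b) := by
    simpa [div_eq_mul_inv] using
      tendsto_const_nhds.add (tendsto_one_div_add_atTop_nhds_zero_nat.const_mul (B - y 0))
  have hupper N := cesaroMean_le (fun j => hA (Set.mem_range_self j)) N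
  have hcobdd : IsCoboundedUnder (· ≥ ·) atTop (cesaroMean a) :=
    (isBoundedUnder_of ⟨A, hupper⟩).isCoboundedUnder_ge
  calc b = liminf (fun N : ℕ => b + (B - y 0) / (N + 1)) atTop := hlim.liminf_eq.symm
    _ ≤ liminf (cesaroMean a) atTop :=
      liminf_le_liminf (.of_forall hlower) hlim.isBoundedUnder_ge hcobdd

end Cesaro

theorem closed_set_lower_bound_general
    {V : Type*} [Fintype V] [DecidableEq V]
    (Q : Matrix V V ℝ)
    (hQ0 : ∀ v u, 0 ≤ Q v u) (hQ1 : ∀ v, ∑ u, Q v u = 1)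
    (I : Set V) (hI : ∀ v ∈ I, ∀ u ∉ I, Q v u = 0)
    (c x : V → ℝ) (b : ℝ)
    (hb : ∀ v ∈ I, b ≤ c v + x v - Q.mulVec x v) :
    ∀ v ∈ I, b ≤ liminf (fun N : ℕ =>
      (1 / (N + 1 : ℝ)) * ∑ j ∈ Finset.range (N + 1), ((Q ^ j).mulVec c) v) atTop := by
  intro v hv
  have hQ : Q ∈ Matrix.rowStochastic ℝ V := Matrix.mem_rowStochastic_iff_sum.2 ⟨hQ0, hQ1⟩
  have hQI : Q ∈ Matrix.closedUnder ℝ I := hI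
  have hstep j : ((Q ^ j).mulVec (c + x - Q.mulVec x)) v =
      (Q ^ j).mulVec c v + ((Q ^ j).mulVec x v - (Q ^ (j + 1)).mulVec x v) := by
    rw [pow_succ, ← Matrix.mulVec_mulVec, Matrix.mulVec_sub, Matrix.mulVec_add]
    simp only [Pi.add_apply, Pi.sub_apply]
    ring
  obtain ⟨xmin, hxmin⟩ := (Set.finite_range x).bddBelow
  obtain ⟨cmax, hcmax⟩ := (Set.finite_range c).bddAbove
  refine le_liminf_cesaroMean_of_le_add_sub (y := fun j => (Q ^ j).mulVec x v) (fun j => ?_)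
    ⟨xmin, Set.forall_mem_range.2 fun j => ?_⟩ ⟨cmax, Set.forall_mem_range.2 fun j => ?_⟩
  · rw [← hstep]
    exact Matrix.le_mulVec_apply_of_mem_closedUnder (pow_mem hQ j) (pow_mem hQI j) hv hb
  · exact Matrix.le_mulVec_apply_of_mem_rowStochastic (pow_mem hQ j) fun u _ =>
      hxmin (Set.mem_range_self u)
  · exact Matrix.mulVec_apply_le_of_mem_rowStochastic (pow_mem hQ j) v fun u =>
      hcmax (Set.mem_range_self u)

/-- if `I` is closed under the row-stochastic matrix `Q` and the
potential-transformed one-step reward `c + x − Qx` is at least `b` on `I`, then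
the limiting average payoff from every state of `I` is at least `b`. -/
theorem closed_set_lower_bound
    {V : Type*} [Fintype V] [DecidableEq V] [Nonempty V]
    (Q : Matrix V V ℝ)
    (hQ0 : ∀ v u, 0 ≤ Q v u) (hQ1 : ∀ v, ∑ u, Q v u = 1)
    (I : Set V) (hI : ∀ v ∈ I, ∀ u ∉ I, Q v u = 0)
    (c x : V → ℝ) (b : ℝ)
    (hb : ∀ v ∈ I, b ≤ c v + x v - Q.mulVec x v) :
    ∀ v ∈ I, b ≤ liminf (fun N : ℕ =>
      (1 / (N + 1 : ℝ)) * ∑ j ∈ Finset.range (N + 1), ((Q ^ j).mulVec c) v) atTop :=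
  closed_set_lower_bound_general Q hQ0 hQ1 I hI c x b hb
end

section
/- Let V be a finite nonempty set, Q ∈ ℝ^{V×V} a row-stochastic matrix (all entries nonnegative, every row summing to 1), and F ⊆ V a set closed under Q, i.e., Q_{uw} = 0 whenever u ∈ F and w ∉ F. Let c, x ∈ ℝ^V and a ∈ ℝ satisfy c_u + x_u − (Qx)_u ≤ a for every u ∈ F. Then for every u ∈ F: limsup_{N→∞} (1/(N+1)) ∑_{j=0}^{N} (Q^j c)_u ≤ a. -/
/-!
Write `g = c + x - Qx`, so that `g ≤ a` on `F`. Since `F` is closed, every row `u ∈ F` of `Q ^ j`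
is a probability vector supported in `F`, hence `(Q ^ j g) u ≤ a`, that is
`(Q ^ j c) u ≤ a + (Q ^ (j + 1) x) u - (Q ^ j x) u`. Summing over `j ≤ N` telescopes the potential
terms to `(Q ^ (N + 1) x) u - x u`, which stays bounded by `2 ‖x‖`; dividing by `N + 1` gives
Cesàro averages at most `a + 2 ‖x‖ / (N + 1)`.
-/

open Filter Finset

namespace Matrix

variable {n R : Type*}

def IsClosedUnder [Zero R] (F : Set n) (M : Matrix n n R) : Prop :=
  ∀ u ∈ F, ∀ w ∉ F, M u w = 0

namespace IsClosedUnder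

variable [Semiring R] {F : Set n}

theorem one [DecidableEq n] : IsClosedUnder F (1 : Matrix n n R) := fun _ hu _ hw =>
  one_apply_ne (ne_of_mem_of_not_mem hu hw)

theorem mul [Fintype n] {M N : Matrix n n R} (hM : IsClosedUnder F M) (hN : IsClosedUnder F N) :
    IsClosedUnder F (M * N) := by
  intro u hu w hw
  rw [mul_apply]
  refine sum_eq_zero fun z _ => ?_
  by_cases hz : z ∈ F
  · rw [hN z hz w hw, mul_zero]
  · rw [hM u hu z hz, zero_mul]

theorem pow [Fintype n] [DecidableEq n] {M : Matrix n n R} (hM : IsClosedUnder F M) (j : ℕ) :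
    IsClosedUnder F (M ^ j) := by
  induction j with
  | zero => exact one
  | succ j ih => exact pow_succ M j ▸ ih.mul hM

end IsClosedUnder

section Stochastic

variable [Fintype n] [DecidableEq n] [Semiring R] [PartialOrder R] [IsOrderedRing R]
  {M : Matrix n n R}

theorem mulVec_apply_le_of_mem_rowStochastic_s14 (hM : M ∈ rowStochastic R n) {g : n → R} {a : R}
    {u : n} (hg : ∀ w, M u w ≠ 0 → g w ≤ a) : (M *ᵥ g) u ≤ a :=
  calc (M *ᵥ g) u = ∑ w, M u w * g w := rfl
    _ ≤ ∑ w, M u w * a := by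
      refine sum_le_sum fun w _ => ?_
      by_cases hw : M u w = 0
      · rw [hw, zero_mul, zero_mul]
      · exact mul_le_mul_of_nonneg_left (hg w hw) (nonneg_of_mem_rowStochastic hM)
    _ = a := by rw [← sum_mul, sum_row_of_mem_rowStochastic hM, one_mul]

theorem IsClosedUnder.mulVec_apply_le {F : Set n} (hM : M ∈ rowStochastic R n)
    (hMF : IsClosedUnder F M) {g : n → R} {a : R} (hg : ∀ w ∈ F, g w ≤ a) {u : n} (hu : u ∈ F) :
    (M *ᵥ g) u ≤ a :=
  mulVec_apply_le_of_mem_rowStochastic_s14 hM fun w hw =>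
    hg w (by_contra fun hwF => hw (hMF u hu w hwF))

end Stochastic

theorem abs_mulVec_apply_le_norm [Fintype n] [DecidableEq n] {M : Matrix n n ℝ}
    (hM : M ∈ rowStochastic ℝ n) (y : n → ℝ) (u : n) : |(M *ᵥ y) u| ≤ ‖y‖ := by
  have hy (w : n) : |y w| ≤ ‖y‖ := norm_le_pi_norm y w
  refine abs_le.2 ⟨?_, mulVec_apply_le_of_mem_rowStochastic_s14 hM fun w _ =>
    (le_abs_self _).trans (hy w)⟩
  have := mulVec_apply_le_of_mem_rowStochastic_s14 hM (g := -y) (u := u) fun w _ =>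
    (neg_le_abs (y w)).trans (hy w)
  rw [mulVec_neg, Pi.neg_apply] at this
  linarith

end Matrix

open Matrix

theorem limsup_cesaro_le {s : ℕ → ℝ} {a b K : ℝ} (hb : ∀ j, b ≤ s j)
    (hK : ∀ N : ℕ, ∑ j ∈ range (N + 1), s j ≤ (N + 1) * a + K) :
    limsup (fun N : ℕ => (1 / (N + 1 : ℝ)) * ∑ j ∈ range (N + 1), s j) atTop ≤ a := by
  have hpos (N : ℕ) : (0 : ℝ) < N + 1 := N.cast_add_one_pos
  have hlower (N : ℕ) : b ≤ (1 / (N + 1 : ℝ)) * ∑ j ∈ range (N + 1), s j := by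
    have := card_nsmul_le_sum (range (N + 1)) s b fun j _ => hb j
    rw [card_range, nsmul_eq_mul, Nat.cast_succ] at this
    rwa [one_div, le_inv_mul_iff₀ (hpos N)]
  have hupper (N : ℕ) : (1 / (N + 1 : ℝ)) * ∑ j ∈ range (N + 1), s j ≤ a + K / (N + 1) :=
    calc _ ≤ (1 / (N + 1 : ℝ)) * ((N + 1) * a + K) :=
          mul_le_mul_of_nonneg_left (hK N) (one_div_pos.2 (hpos N)).le
      _ = a + K / (N + 1) := by field_simp
  have hlim : Tendsto (fun N : ℕ => a + K / (N + 1 : ℝ)) atTop (nhds a) := by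
    simpa using (tendsto_const_div_atTop_nhds_zero_nat K).comp (tendsto_add_atTop_nat 1)
      |>.const_add a
  calc _ ≤ limsup (fun N : ℕ => a + K / (N + 1 : ℝ)) atTop :=
        limsup_le_limsup (.of_forall hupper) (isCoboundedUnder_le_of_le atTop hlower)
          hlim.isBoundedUnder_le
    _ = a := hlim.limsup_eq

section Potential

variable {V : Type*} [Fintype V] [DecidableEq V] {Q : Matrix V V ℝ} {F : Set V} {c x : V → ℝ}
  {a : ℝ}

theorem pow_mulVec_apply_le_add_sub (hQ : Q ∈ rowStochastic ℝ V) (hF : IsClosedUnder F Q)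
    (ha : ∀ u ∈ F, c u + x u - (Q *ᵥ x) u ≤ a) {u : V} (hu : u ∈ F) (j : ℕ) :
    (Q ^ j *ᵥ c) u ≤ a + (Q ^ (j + 1) *ᵥ x) u - (Q ^ j *ᵥ x) u := by
  have := (hF.pow j).mulVec_apply_le (pow_mem hQ j) (g := c + x - Q *ᵥ x) ha hu
  rw [mulVec_sub, mulVec_add, mulVec_mulVec, ← pow_succ] at this
  simp only [Pi.add_apply, Pi.sub_apply] at this
  linarith

theorem sum_range_pow_mulVec_apply_le (hQ : Q ∈ rowStochastic ℝ V) (hF : IsClosedUnder F Q)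
    (ha : ∀ u ∈ F, c u + x u - (Q *ᵥ x) u ≤ a) {u : V} (hu : u ∈ F) (N : ℕ) :
    ∑ j ∈ range (N + 1), (Q ^ j *ᵥ c) u ≤ (N + 1) * a + (Q ^ (N + 1) *ᵥ x) u - x u :=
  calc ∑ j ∈ range (N + 1), (Q ^ j *ᵥ c) u
      ≤ ∑ j ∈ range (N + 1), (a + ((Q ^ (j + 1) *ᵥ x) u - (Q ^ j *ᵥ x) u)) :=
        sum_le_sum fun j _ => by linarith [pow_mulVec_apply_le_add_sub hQ hF ha hu j]
    _ = (N + 1) * a + (Q ^ (N + 1) *ᵥ x) u - x u := by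
        rw [sum_add_distrib, sum_range_sub (fun j => (Q ^ j *ᵥ x) u)]
        simp only [sum_const, card_range, nsmul_eq_mul, Nat.cast_succ, pow_zero, one_mulVec]
        ring

end Potential

theorem closed_set_upper_bound_general
    {V : Type*} [Fintype V] [DecidableEq V]
    (Q : Matrix V V ℝ)
    (hQ0 : ∀ v u, 0 ≤ Q v u) (hQ1 : ∀ v, ∑ u, Q v u = 1)
    (F : Set V) (hF : ∀ u ∈ F, ∀ w ∉ F, Q u w = 0)
    (c x : V → ℝ) (a : ℝ)
    (ha : ∀ u ∈ F, c u + x u - Q.mulVec x u ≤ a) :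
    ∀ u ∈ F, limsup (fun N : ℕ =>
      (1 / (N + 1 : ℝ)) * ∑ j ∈ Finset.range (N + 1), ((Q ^ j).mulVec c) u) atTop ≤ a := by
  intro u hu
  have hQ : Q ∈ rowStochastic ℝ V := mem_rowStochastic_iff_sum.2 ⟨hQ0, hQ1⟩
  refine limsup_cesaro_le (b := -‖c‖) (K := 2 * ‖x‖)
    (fun j => (abs_le.1 (abs_mulVec_apply_le_norm (pow_mem hQ j) c u)).1) fun N => ?_
  have hx₀ := abs_le.1 (abs_mulVec_apply_le_norm (pow_mem hQ 0) x u)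
  have hxN := abs_le.1 (abs_mulVec_apply_le_norm (pow_mem hQ (N + 1)) x u)
  rw [pow_zero, one_mulVec] at hx₀
  linarith [sum_range_pow_mulVec_apply_le hQ hF ha hu N]

/-- if `F` is closed under the row-stochastic matrix `Q` and the
potential-transformed one-step reward `c + x − Qx` is at most `a` on `F`, then
the limsup of the Cesàro averages from every state of `F` is at most `a`. -/
theorem closed_set_upper_bound
    {V : Type*} [Fintype V] [DecidableEq V] [Nonempty V]
    (Q : Matrix V V ℝ)
    (hQ0 : ∀ v u, 0 ≤ Q v u) (hQ1 : ∀ v, ∑ u, Q v u = 1)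
    (F : Set V) (hF : ∀ u ∈ F, ∀ w ∉ F, Q u w = 0)
    (c x : V → ℝ) (a : ℝ)
    (ha : ∀ u ∈ F, c u + x u - Q.mulVec x u ≤ a) :
    ∀ u ∈ F, limsup (fun N : ℕ =>
      (1 / (N + 1 : ℝ)) * ∑ j ∈ Finset.range (N + 1), ((Q ^ j).mulVec c) u) atTop ≤ a :=
  closed_set_upper_bound_general Q hQ0 hQ1 F hF c x a ha
end

section
/- Let Γ be a stochastic game with nonnegative rewards (0 ≤ r^{vu}_{kℓ} for all v,u,k,ℓ), and let W > 0 be such that every nonzero transition probability satisfies p^{vu}_{kℓ} ≥ 1/W. Let ε > 0, let x ∈ ℝ^V be a potential vector, and suppose there exist disjoint nonempty subsets I, F ⊆ V and reals a', b' ∈ [0, m⁺(x)] with b' − a' ≥ 3ε, a' < (m⁺(x)+m⁻(x))/2, and b' ≥ (m⁺(x)+m⁻(x))/2, such that: (N4) m^v(x) ≥ b' for all v ∈ I, and m^u(x) < a' for all u ∈ F; (N5) x^u − x^v ≥ |L^v|·W·R^v(x)²/ε for all u ∉ I and v ∈ I; (N6) x^u − x^v ≥ |K^u|·W·R^u(x)²/ε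 for all u ∈ F and v ∉ F. Then there exist strategies α^v ∈ Δ(K^v) for v ∈ I and β^u ∈ Δ(L^u) for u ∈ F such that: (N1) α^v_k · p^{vu}_{kℓ} = 0 for all v ∈ I, u ∉ I, k ∈ K^v, ℓ ∈ L^v; (N2) β^u_ℓ · p^{uw}_{kℓ} = 0 for all u ∈ F, w ∉ F, ℓ ∈ L^u, k ∈ K^u; and (N3) min_{β̃∈Δ(L^v)} (α^v)ᵀ A^v(x) β̃ ≥ b' − ε for all v ∈ I, and max_{α̃∈Δ(K^u)} α̃ᵀ A^u(x) β^u < a' + ε for all u ∈ F. (Since (b'−ε) − (a'+ε) ≥ ε, the game is ε-non-ergodic.) -/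
open Filter Matrix

variable {V : Type*} [Fintype V] [DecidableEq V] [Nonempty V]
  {K L : V → Type*} [∀ v, Fintype (K v)] [∀ v, Nonempty (K v)]
  [∀ v, Fintype (L v)] [∀ v, Nonempty (L v)]

/-- The transition matrix `Q(α,β)` induced by a pair of stationary strategies. -/
noncomputable def Qmat (p : ∀ v : V, K v → L v → V → ℝ)
    (α : ∀ v, K v → ℝ) (β : ∀ v, L v → ℝ) : Matrix V V ℝ :=
  Matrix.of fun v u => ∑ k, ∑ l, α v k * β v l * p v k l u

/-- The expected one-step reward vector `c(α,β)` induced by stationary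
strategies. -/
noncomputable def cvec (p r : ∀ v : V, K v → L v → V → ℝ)
    (α : ∀ v, K v → ℝ) (β : ∀ v, L v → ℝ) : V → ℝ :=
  fun v => ∑ k, ∑ l, α v k * β v l * ∑ u, p v k l u * r v k l u

/-- The limiting average payoff `g^v(α,β)` from initial position `v`. -/
noncomputable def gval (p r : ∀ v : V, K v → L v → V → ℝ)
    (α : ∀ v, K v → ℝ) (β : ∀ v, L v → ℝ) (v : V) : ℝ :=
  liminf (fun N : ℕ => (1 / (N + 1 : ℝ)) * ∑ j ∈ Finset.range (N + 1),
    ((Qmat p α β ^ j).mulVec (cvec p r α β)) v) atTop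

/-- `m⁺(x) = max_v m^v(x)`. -/
noncomputable def mplus (p r : ∀ v : V, K v → L v → V → ℝ) (x : V → ℝ) : ℝ :=
  Finset.univ.sup' Finset.univ_nonempty (locVal p r x)

/-- `m⁻(x) = min_v m^v(x)`. -/
noncomputable def mminus (p r : ∀ v : V, K v → L v → V → ℝ) (x : V → ℝ) : ℝ :=
  Finset.univ.inf' Finset.univ_nonempty (locVal p r x)

/-- `ã^v_{kℓ}(x) = ∑_u p^{vu}_{kℓ} r^{vu}_{kℓ} + ∑_{u : x^u ≤ x^v} p^{vu}_{kℓ}(x^v − x^u)`. -/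
noncomputable def atil (p r : ∀ v : V, K v → L v → V → ℝ) (x : V → ℝ)
    (v : V) (k : K v) (l : L v) : ℝ :=
  (∑ u, p v k l u * r v k l u) + ∑ u, if x u ≤ x v then p v k l u * (x v - x u) else 0

/-- `b̃^v_{kℓ}(x) = m⁺(x) − ∑_u p^{vu}_{kℓ} r^{vu}_{kℓ} − ∑_{u : x^u ≥ x^v} p^{vu}_{kℓ}(x^v − x^u)`. -/
noncomputable def btil (p r : ∀ v : V, K v → L v → V → ℝ) (x : V → ℝ)
    (v : V) (k : K v) (l : L v) : ℝ :=
  mplus p r x - (∑ u, p v k l u * r v k l u) -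
    ∑ u, if x v ≤ x u then p v k l u * (x v - x u) else 0

/-- `R^v(x)`: the maximum of `ã^v_{kℓ}(x)` if `m^v(x) ≥ (m⁺(x)+m⁻(x))/2`, and
the maximum of `b̃^v_{kℓ}(x)` otherwise. -/
noncomputable def Rval (p r : ∀ v : V, K v → L v → V → ℝ) (x : V → ℝ) (v : V) : ℝ :=
  if (mplus p r x + mminus p r x) / 2 ≤ locVal p r x v then
    (Finset.univ : Finset (K v × L v)).sup' Finset.univ_nonempty
      (fun kl => atil p r x v kl.1 kl.2)
  else
    (Finset.univ : Finset (K v × L v)).sup' Finset.univ_nonempty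
      (fun kl => btil p r x v kl.1 kl.2)

/-!
At a position `v ∈ I`, start from an optimal strategy `α₀` of player 1 in `A^v(x)`. Every entry
is at most `R = R^v(x)`, and by (N5) an entry whose row can leave `I` is smaller by at least
`|L^v| R² / ε`: the potential drop `x^v − x^u` is weighted by a probability `≥ 1/W`. As `α₀`
still guarantees `m^v(x) ≥ b'` in every column, the rows that can leave carry mass at most
`ε / (|L^v| R)` per column, hence `s ≤ ε / R` in total, and conditioning `α₀` on the remaining rows
costs at most `s R ≤ ε`. On `F` the same argument runs for player 2 on `m⁺(x) − A^u(x)ᵀ`, using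
(N6). Optimal strategies exist for both players (the minimax theorem): separate the image of the
opponent's simplex from an open orthant.
-/

section Simplex

variable {ι : Type*} [Fintype ι] {w f : ι → ℝ} {c : ℝ}

lemma le_dotProduct_of_forall_le (hw : w ∈ stdSimplex ℝ ι) (h : ∀ i, c ≤ f i) :
    c ≤ w ⬝ᵥ f :=
  calc c = ∑ i, w i * c := by rw [← Finset.sum_mul, hw.2, one_mul]
    _ ≤ w ⬝ᵥ f := Finset.sum_le_sum fun i _ => mul_le_mul_of_nonneg_left (h i) (hw.1 i)

lemma dotProduct_le_of_forall_le (hw : w ∈ stdSimplex ℝ ι) (h : ∀ i, f i ≤ c) :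
    w ⬝ᵥ f ≤ c :=
  calc w ⬝ᵥ f ≤ ∑ i, w i * c :=
        Finset.sum_le_sum fun i _ => mul_le_mul_of_nonneg_left (h i) (hw.1 i)
    _ = c := by rw [← Finset.sum_mul, hw.2, one_mul]

lemma linearMap_apply_eq_dotProduct [DecidableEq ι] (φ : (ι → ℝ) →ₗ[ℝ] ℝ) (y : ι → ℝ) :
    φ y = (fun i => φ (Pi.single i 1)) ⬝ᵥ y := by
  conv_lhs => rw [← Finset.univ_sum_single y]
  simp only [map_sum, dotProduct]
  refine Finset.sum_congr rfl fun i _ => ?_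
  simpa [mul_comm] using congrArg φ (Pi.single_smul i (y i) (1 : ℝ))

lemma nonneg_of_forall_dotProduct_lt [DecidableEq ι] {a : ι → ℝ} {u v : ℝ}
    (h : ∀ y : ι → ℝ, (∀ i, y i < v) → a ⬝ᵥ y < u) (i : ι) : 0 ≤ a i := by
  by_contra! hi
  set y₀ : ι → ℝ := fun _ => v - 1
  have key : ∀ t : ℝ, 0 ≤ t → a ⬝ᵥ y₀ - t * a i < u := fun t ht => by
    have hy : ∀ j, (y₀ - t • Pi.single i 1 : ι → ℝ) j < v := fun j => by
      have : 0 ≤ t * (Pi.single i 1 : ι → ℝ) j :=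
        mul_nonneg ht (by rw [Pi.single_apply]; split_ifs <;> norm_num)
      simp only [Pi.sub_apply, Pi.smul_apply, smul_eq_mul, y₀]
      linarith
    simpa [dotProduct_sub] using h _ hy
  have h₀ := key 0 le_rfl
  have h₁ := key ((u - a ⬝ᵥ y₀) / -a i) (div_nonneg (by linarith) (by linarith))
  have : (u - a ⬝ᵥ y₀) / -a i * a i = -(u - a ⬝ᵥ y₀) := by field_simp [hi.ne]
  linarith

lemma exists_mem_stdSimplex_le_dotProduct [Nonempty ι] {D : Set (ι → ℝ)} {v : ℝ}
    (hconv : Convex ℝ D) (hne : D.Nonempty) (hD : ∀ y ∈ D, ∃ i, v ≤ y i) :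
    ∃ α ∈ stdSimplex ℝ ι, ∀ y ∈ D, v ≤ α ⬝ᵥ y := by
  classical
  set O : Set (ι → ℝ) := Set.univ.pi fun _ => Set.Iio v
  have hdisj : Disjoint O D := Set.disjoint_left.2 fun y hyO hyD => by
    obtain ⟨i, hi⟩ := hD y hyD
    exact (hi.trans_lt (hyO i (Set.mem_univ i))).false
  obtain ⟨φ, u, hφO, hφD⟩ := geometric_hahn_banach_open
    (convex_pi fun _ _ => convex_Iio v) (isOpen_set_pi Set.finite_univ fun _ _ => isOpen_Iio)
    hconv hdisj
  set a : ι → ℝ := fun i => φ (Pi.single i 1)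
  have hφ : ∀ y, φ y = a ⬝ᵥ y := linearMap_apply_eq_dotProduct φ.toLinearMap
  have hO : ∀ y : ι → ℝ, (∀ i, y i < v) → a ⬝ᵥ y < u := fun y hy =>
    hφ y ▸ hφO y fun i _ => hy i
  have ha := nonneg_of_forall_dotProduct_lt hO
  have hconst : ∀ t < v, t * ∑ i, a i < u := fun t ht => by
    simpa [dotProduct, Finset.mul_sum, mul_comm] using hO (fun _ => t) fun _ => ht
  have hS : 0 < ∑ i, a i := by
    refine (Finset.sum_nonneg fun i _ => ha i).lt_of_ne fun hS => ?_
    have ha0 : a = 0 := funext fun i =>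
      (Finset.sum_eq_zero_iff_of_nonneg fun i _ => ha i).1 hS.symm i (Finset.mem_univ i)
    obtain ⟨y, hy⟩ := hne
    have h₁ := hconst (v - 1) (by linarith)
    have h₂ := hφD y hy
    rw [hφ, ha0, zero_dotProduct] at h₂
    rw [← hS, mul_zero] at h₁
    linarith
  have hvu : v * ∑ i, a i ≤ u := by
    by_contra! h
    have := hconst (u / ∑ i, a i) ((div_lt_iff₀ hS).2 h)
    rw [div_mul_cancel₀ _ hS.ne'] at this
    exact this.false
  refine ⟨fun i => a i / ∑ j, a j, ⟨fun i => div_nonneg (ha i) hS.le, ?_⟩, fun y hy => ?_⟩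
  · rw [← Finset.sum_div, div_self hS.ne']
  · have : (fun i => a i / ∑ j, a j) ⬝ᵥ y = a ⬝ᵥ y / ∑ j, a j := by
      simp only [dotProduct, div_mul_eq_mul_div, Finset.sum_div]
    rw [this, le_div_iff₀ hS, ← hφ]
    exact hvu.trans (hφD y hy)

end Simplex

section MatrixGame

variable {m n : Type*} [Fintype m] [Fintype n] (A : Matrix m n ℝ)

lemma sum_sum_mul_eq_dotProduct_mulVec (α : m → ℝ) (β : n → ℝ) :
    ∑ k, ∑ l, α k * A k l * β l = α ⬝ᵥ A *ᵥ β := by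
  simp [dotProduct, mulVec, Finset.mul_sum, mul_assoc]

lemma matVal_eq_iSup_iInf :
    matVal A = ⨆ α : stdSimplex ℝ m, ⨅ β : stdSimplex ℝ n, α.1 ⬝ᵥ A *ᵥ β.1 := by
  simp only [matVal, sum_sum_mul_eq_dotProduct_mulVec]

lemma exists_forall_vecMul_le_dotProduct_mulVec [Nonempty n] (α : m → ℝ) :
    ∃ l, ∀ β ∈ stdSimplex ℝ n, (α ᵥ* A) l ≤ α ⬝ᵥ A *ᵥ β := by
  obtain ⟨l, -, hl⟩ := Finset.univ.exists_min_image (α ᵥ* A) Finset.univ_nonempty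
  refine ⟨l, fun β hβ => ?_⟩
  rw [dotProduct_mulVec, dotProduct_comm]
  exact le_dotProduct_of_forall_le hβ fun l' => hl l' (Finset.mem_univ l')

lemma bddBelow_range_dotProduct_mulVec [Nonempty n] (α : m → ℝ) :
    BddBelow (Set.range fun β : stdSimplex ℝ n => α ⬝ᵥ A *ᵥ β.1) := by
  obtain ⟨l, hl⟩ := exists_forall_vecMul_le_dotProduct_mulVec A α
  exact ⟨_, Set.forall_mem_range.2 fun β => hl β β.2⟩

lemma bddAbove_range_iInf_dotProduct_mulVec [Nonempty m] [Nonempty n] :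
    BddAbove (Set.range fun α : stdSimplex ℝ m => ⨅ β : stdSimplex ℝ n, α.1 ⬝ᵥ A *ᵥ β.1) := by
  obtain β₀ : stdSimplex ℝ n := Classical.arbitrary _
  obtain ⟨k, -, hk⟩ := Finset.univ.exists_max_image (A *ᵥ β₀.1) Finset.univ_nonempty
  refine ⟨(A *ᵥ β₀.1) k, Set.forall_mem_range.2 fun α => ?_⟩
  exact (ciInf_le (bddBelow_range_dotProduct_mulVec A α.1) β₀).trans
    (dotProduct_le_of_forall_le α.2 fun k' => hk k' (Finset.mem_univ k'))

variable [Nonempty m] [Nonempty n]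

lemma exists_vecMul_le_matVal {α : m → ℝ} (hα : α ∈ stdSimplex ℝ m) :
    ∃ l, (α ᵥ* A) l ≤ matVal A := by
  obtain ⟨l, hl⟩ := exists_forall_vecMul_le_dotProduct_mulVec A α
  rw [matVal_eq_iSup_iInf]
  exact ⟨l, le_ciSup_of_le (bddAbove_range_iInf_dotProduct_mulVec A) ⟨α, hα⟩
    (le_ciInf fun β => hl β β.2)⟩

lemma exists_matVal_le_mulVec {β : n → ℝ} (hβ : β ∈ stdSimplex ℝ n) :
    ∃ k, matVal A ≤ (A *ᵥ β) k := by
  obtain ⟨k, -, hk⟩ := Finset.univ.exists_max_image (A *ᵥ β) Finset.univ_nonempty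
  rw [matVal_eq_iSup_iInf]
  exact ⟨k, ciSup_le fun α => (ciInf_le (bddBelow_range_dotProduct_mulVec A α.1) ⟨β, hβ⟩).trans
    (dotProduct_le_of_forall_le α.2 fun k' => hk k' (Finset.mem_univ k'))⟩

theorem exists_forall_matVal_le_vecMul :
    ∃ α ∈ stdSimplex ℝ m, ∀ l, matVal A ≤ (α ᵥ* A) l := by
  classical
  obtain ⟨α, hα, h⟩ := exists_mem_stdSimplex_le_dotProduct
    ((convex_stdSimplex ℝ n).linear_image A.mulVecLin)
    ((Set.Nonempty.of_subtype (s := stdSimplex ℝ n)).image _)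
    (by rintro _ ⟨β, hβ, rfl⟩; exact exists_matVal_le_mulVec A hβ)
  refine ⟨α, hα, fun l => ?_⟩
  have := h _ ⟨_, single_mem_stdSimplex ℝ l, rfl⟩
  rwa [mulVecLin_apply, mulVec_single_one] at this

theorem exists_forall_mulVec_le_matVal :
    ∃ β ∈ stdSimplex ℝ n, ∀ k, (A *ᵥ β) k ≤ matVal A := by
  classical
  obtain ⟨β, hβ, h⟩ := exists_mem_stdSimplex_le_dotProduct (v := -matVal A)
    ((convex_stdSimplex ℝ m).linear_image (-A.vecMulLinear))
    ((Set.Nonempty.of_subtype (s := stdSimplex ℝ m)).image _)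
    (by
      rintro _ ⟨α, hα, rfl⟩
      obtain ⟨l, hl⟩ := exists_vecMul_le_matVal A hα
      exact ⟨l, by simpa using hl⟩)
  refine ⟨β, hβ, fun k => ?_⟩
  have := h _ ⟨_, single_mem_stdSimplex ℝ k, rfl⟩
  simp only [LinearMap.neg_apply, vecMulLinear_apply, single_one_vecMul, dotProduct_comm β] at this
  exact le_of_neg_le_neg (this.trans_eq (neg_dotProduct _ _))

end MatrixGame

section Conditioning

variable {ι : Type*} [Fintype ι] [DecidableEq ι]

noncomputable def condCompl (w : ι → ℝ) (Z : Finset ι) : ι → ℝ :=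
  fun i => if i ∈ Z then 0 else w i / (1 - ∑ j ∈ Z, w j)

lemma condCompl_dotProduct (w : ι → ℝ) (Z : Finset ι) (f : ι → ℝ) :
    condCompl w Z ⬝ᵥ f = (w ⬝ᵥ f - ∑ i ∈ Z, w i * f i) / (1 - ∑ j ∈ Z, w j) := by
  rw [← Finset.univ_inter Z, ← Finset.sum_ite_mem, Finset.univ_inter, dotProduct, dotProduct,
    ← Finset.sum_sub_distrib, Finset.sum_div]
  refine Finset.sum_congr rfl fun i _ => ?_
  unfold condCompl
  split_ifs <;> ring

lemma condCompl_mem_stdSimplex {w : ι → ℝ} {Z : Finset ι} (hw : w ∈ stdSimplex ℝ ι)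
    (hZ : ∑ j ∈ Z, w j < 1) : condCompl w Z ∈ stdSimplex ℝ ι := by
  refine ⟨fun i => ?_, ?_⟩
  · unfold condCompl
    split_ifs
    exacts [le_rfl, div_nonneg (hw.1 i) (sub_nonneg.2 hZ.le)]
  · have := condCompl_dotProduct w Z fun _ => 1
    simp only [dotProduct, mul_one] at this
    rw [this, hw.2, div_self (sub_ne_zero.2 hZ.ne')]

end Conditioning

section Penalty

variable {m n : Type*} [Fintype m] [Fintype n] (A : Matrix m n ℝ) (P : m → n → Prop)
  {α₀ : m → ℝ} {b ε R : ℝ}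

open scoped Classical in
lemma mass_penalized_in_col_mul_le (hα₀ : α₀ ∈ stdSimplex ℝ m) (hb : ∀ l, b ≤ (α₀ ᵥ* A) l)
    (hb0 : 0 ≤ b) (hε : 0 < ε) (hR0 : 0 < R) (hR : ∀ k l, A k l ≤ R)
    (hP : ∀ k l, P k l → A k l + Fintype.card n * R ^ 2 / ε ≤ R) (l : n) :
    (∑ k, if P k l then α₀ k else 0) * Fintype.card n * R ≤ ε := by
  set Q := Fintype.card n * R ^ 2 / ε
  set T := ∑ k, if P k l then α₀ k else 0
  have hcol : b ≤ R - Q * T :=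
    calc b ≤ ∑ k, α₀ k * A k l := hb l
      _ ≤ ∑ k, α₀ k * (R - if P k l then Q else 0) :=
        Finset.sum_le_sum fun k _ => mul_le_mul_of_nonneg_left
          (by split_ifs with h; exacts [by linarith [hP k l h], by linarith [hR k l]]) (hα₀.1 k)
      _ = R - Q * T := by
        rw [Finset.mul_sum]
        simp only [mul_sub, Finset.sum_sub_distrib, ← Finset.sum_mul, hα₀.2, one_mul]
        congr 1
        exact Finset.sum_congr rfl fun k _ => by split_ifs <;> ring
  have : T * Fintype.card n * R * R ≤ ε * R := by
    have hQT : Q * T * ε = T * Fintype.card n * R * R := by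
      simp only [Q]; field_simp
    nlinarith
  exact le_of_mul_le_mul_right this hR0

open scoped Classical in
lemma mass_penalized_rows_mul_le [Nonempty n] (hα₀ : α₀ ∈ stdSimplex ℝ m)
    (hb : ∀ l, b ≤ (α₀ ᵥ* A) l) (hb0 : 0 ≤ b) (hε : 0 < ε) (hR0 : 0 < R)
    (hR : ∀ k l, A k l ≤ R) (hP : ∀ k l, P k l → A k l + Fintype.card n * R ^ 2 / ε ≤ R) :
    (∑ k ∈ Finset.univ.filter fun k => ∃ l, P k l, α₀ k) * R ≤ ε := by
  have hN : (0 : ℝ) < Fintype.card n := by exact_mod_cast Fintype.card_pos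
  have hunion : ∀ k, (if ∃ l, P k l then α₀ k else 0) ≤ ∑ l, if P k l then α₀ k else 0 := by
    intro k
    split_ifs with h
    · obtain ⟨l, hl⟩ := h
      refine le_of_eq_of_le (if_pos hl).symm
        (Finset.single_le_sum (f := fun l => if P k l then α₀ k else 0) (fun l _ => ?_)
          (Finset.mem_univ l))
      split_ifs
      exacts [hα₀.1 k, le_rfl]
    · exact Finset.sum_nonneg fun l _ => by split_ifs; exacts [hα₀.1 k, le_rfl]
  have hsum : (∑ k ∈ Finset.univ.filter fun k => ∃ l, P k l, α₀ k) * Fintype.card n * R ≤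
      Fintype.card n * ε :=
    calc _ ≤ ∑ l, (∑ k, if P k l then α₀ k else 0) * Fintype.card n * R := by
          rw [Finset.sum_filter, ← Finset.sum_mul, ← Finset.sum_mul, Finset.sum_comm]
          gcongr with k
          exact hunion k
      _ ≤ ∑ _l : n, ε := Finset.sum_le_sum fun l _ =>
          mass_penalized_in_col_mul_le A P hα₀ hb hb0 hε hR0 hR hP l
      _ = Fintype.card n * ε := by simp
  nlinarith

theorem exists_avoiding_strategy_of_penalty [Nonempty n] (hα₀ : α₀ ∈ stdSimplex ℝ m)
    (hb : ∀ l, b ≤ (α₀ ᵥ* A) l) (hε : 0 < ε) (hεb : ε < b) (hR : ∀ k l, A k l ≤ R)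
    (hP : ∀ k l, P k l → A k l + Fintype.card n * R ^ 2 / ε ≤ R) :
    ∃ α ∈ stdSimplex ℝ m, (∀ k l, P k l → α k = 0) ∧ ∀ l, b - ε ≤ (α ᵥ* A) l := by
  classical
  obtain ⟨l₀⟩ := ‹Nonempty n›
  have hbR : b ≤ R := (hb l₀).trans (dotProduct_le_of_forall_le hα₀ fun k => hR k l₀)
  set Z := Finset.univ.filter fun k => ∃ l, P k l
  set s := ∑ k ∈ Z, α₀ k
  have hsR : s * R ≤ ε :=
    mass_penalized_rows_mul_le A P hα₀ hb (by linarith) hε (by linarith) hR hP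
  have hs0 : 0 ≤ s := Finset.sum_nonneg fun k _ => hα₀.1 k
  have hs : s < 1 := by nlinarith
  refine ⟨condCompl α₀ Z, condCompl_mem_stdSimplex hα₀ hs,
    fun k l hkl => if_pos (Finset.mem_filter.2 ⟨Finset.mem_univ k, l, hkl⟩), fun l => ?_⟩
  have hZ : ∑ k ∈ Z, α₀ k * A k l ≤ s * R := by
    rw [Finset.sum_mul]
    exact Finset.sum_le_sum fun k _ => mul_le_mul_of_nonneg_left (hR k l) (hα₀.1 k)
  calc b - ε ≤ (b - ε) / (1 - s) :=
        le_div_self (by linarith) (by linarith) (by linarith)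
    _ ≤ ((α₀ ᵥ* A) l - ∑ k ∈ Z, α₀ k * A k l) / (1 - s) := by
        gcongr <;> linarith [hb l]
    _ = (condCompl α₀ Z ᵥ* A) l := (condCompl_dotProduct α₀ Z _).symm

end Penalty

lemma le_sum_mul_max_zero {ι : Type*} [Fintype ι] {q d : ι → ℝ} {W c : ℝ}
    (hq : ∀ j, 0 ≤ q j) (hW : 0 < W) {i : ι} (hqi : 1 / W ≤ q i) (hc : 0 ≤ c)
    (hd : W * c ≤ d i) : c ≤ ∑ j, q j * max 0 (d j) :=
  calc c = 1 / W * (W * c) := by field_simp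
    _ ≤ q i * max 0 (d i) := mul_le_mul hqi (hd.trans (le_max_right _ _))
        (mul_nonneg hW.le hc) (hq i)
    _ ≤ ∑ j, q j * max 0 (d j) := Finset.single_le_sum
        (f := fun j => q j * max 0 (d j)) (fun j _ => mul_nonneg (hq j) (le_max_left _ _))
        (Finset.mem_univ i)

section StochasticGame

variable {V : Type*} [Fintype V] {K L : V → Type*} (p r : ∀ v : V, K v → L v → V → ℝ)
  (x : V → ℝ) {v : V}

lemma atil_eq_locMat_add (k : K v) (l : L v) :
    atil p r x v k l = locMat p r x v k l + ∑ u, p v k l u * max 0 (x u - x v) := by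
  simp only [atil, locMat, of_apply]
  rw [← Finset.sum_add_distrib, ← Finset.sum_add_distrib]
  refine Finset.sum_congr rfl fun u _ => ?_
  split_ifs with h
  · rw [max_eq_left (by linarith)]; ring
  · rw [max_eq_right (by linarith)]; ring

variable [Nonempty V] [∀ v, Fintype (K v)] [∀ v, Fintype (L v)]

lemma locMat_eq_mplus_sub_btil_add (k : K v) (l : L v) :
    locMat p r x v k l = mplus p r x - btil p r x v k l + ∑ u, p v k l u * max 0 (x v - x u) := by
  simp only [btil, locMat, of_apply, sub_sub, sub_sub_cancel]
  rw [← Finset.sum_add_distrib, ← Finset.sum_add_distrib]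
  refine Finset.sum_congr rfl fun u _ => ?_
  split_ifs with h
  · rw [max_eq_left (by linarith)]; ring
  · rw [max_eq_right (by linarith)]; ring

variable [∀ v, Nonempty (K v)] [∀ v, Nonempty (L v)]

lemma atil_le_Rval (h : (mplus p r x + mminus p r x) / 2 ≤ locVal p r x v) (k : K v) (l : L v) :
    atil p r x v k l ≤ Rval p r x v := by
  rw [Rval, if_pos h]
  exact Finset.le_sup' (fun kl : K v × L v => atil p r x v kl.1 kl.2) (Finset.mem_univ (k, l))

lemma btil_le_Rval (h : locVal p r x v < (mplus p r x + mminus p r x) / 2) (k : K v) (l : L v) :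
    btil p r x v k l ≤ Rval p r x v := by
  rw [Rval, if_neg h.not_ge]
  exact Finset.le_sup' (fun kl : K v × L v => btil p r x v kl.1 kl.2) (Finset.mem_univ (k, l))

variable {p r x} {W ε : ℝ}

theorem exists_row_strategy_staying_in_of_gap (S : Set V) (hp0 : ∀ k l u, 0 ≤ p v k l u)
    (hW : 0 < W) (hpW : ∀ k l u, p v k l u ≠ 0 → 1 / W ≤ p v k l u) (hε : 0 < ε)
    (hmid : (mplus p r x + mminus p r x) / 2 ≤ locVal p r x v) (hεv : ε < locVal p r x v)
    (hgap : ∀ u ∉ S, (Fintype.card (L v) : ℝ) * W * (Rval p r x v) ^ 2 / ε ≤ x u - x v) :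
    ∃ α ∈ stdSimplex ℝ (K v), (∀ u ∉ S, ∀ k l, α k * p v k l u = 0) ∧
      ∀ l, locVal p r x v - ε ≤ (α ᵥ* locMat p r x v) l := by
  obtain ⟨α₀, hα₀, hopt⟩ := exists_forall_matVal_le_vecMul (locMat p r x v)
  have hjump : ∀ k l, 0 ≤ ∑ u, p v k l u * max 0 (x u - x v) := fun k l =>
    Finset.sum_nonneg fun u _ => mul_nonneg (hp0 k l u) (le_max_left _ _)
  obtain ⟨α, hα, hzero, hval⟩ := exists_avoiding_strategy_of_penalty (locMat p r x v)
    (fun k l => ∃ u ∉ S, p v k l u ≠ 0) hα₀ hopt hε hεv (R := Rval p r x v)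
    (fun k l => by linarith [atil_eq_locMat_add p r x k l, atil_le_Rval p r x hmid k l, hjump k l])
    (fun k l ⟨u, hu, hpu⟩ => by
      have := le_sum_mul_max_zero (d := fun u => x u - x v)
        (c := Fintype.card (L v) * Rval p r x v ^ 2 / ε) (hp0 k l) hW
        (hpW k l u hpu) (by positivity)
        (le_of_eq_of_le (by ring) (hgap u hu))
      linarith [atil_eq_locMat_add p r x k l, atil_le_Rval p r x hmid k l])
  refine ⟨α, hα, fun u hu k l => ?_, hval⟩
  by_cases hp : p v k l u = 0
  · rw [hp, mul_zero]
  · rw [hzero k l ⟨u, hu, hp⟩, zero_mul]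

theorem exists_col_strategy_staying_in_of_gap (S : Set V) (hp0 : ∀ k l w, 0 ≤ p v k l w)
    (hW : 0 < W) (hpW : ∀ k l w, p v k l w ≠ 0 → 1 / W ≤ p v k l w) (hε : 0 < ε)
    (hmid : locVal p r x v < (mplus p r x + mminus p r x) / 2)
    (hεv : ε < mplus p r x - locVal p r x v)
    (hgap : ∀ w ∉ S, (Fintype.card (K v) : ℝ) * W * (Rval p r x v) ^ 2 / ε ≤ x v - x w) :
    ∃ β ∈ stdSimplex ℝ (L v), (∀ w ∉ S, ∀ k l, β l * p v k l w = 0) ∧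
      ∀ k, (locMat p r x v *ᵥ β) k ≤ locVal p r x v + ε := by
  set A := locMat p r x v
  set M := mplus p r x
  obtain ⟨β₀, hβ₀, hopt⟩ := exists_forall_mulVec_le_matVal A
  change ∀ k, (A *ᵥ β₀) k ≤ locVal p r x v at hopt
  -- Player 2's problem on `A` is player 1's problem on `M - Aᵀ`.
  let B : Matrix (L v) (K v) ℝ := of fun l k => M - A k l
  have hB : ∀ β ∈ stdSimplex ℝ (L v), ∀ k, (β ᵥ* B) k = M - (A *ᵥ β) k := fun β hβ k => by
    simp [B, vecMul, mulVec, dotProduct, mul_sub, ← Finset.sum_mul, hβ.2, mul_comm]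
  have hjump : ∀ k l, 0 ≤ ∑ w, p v k l w * max 0 (x v - x w) := fun k l =>
    Finset.sum_nonneg fun w _ => mul_nonneg (hp0 k l w) (le_max_left _ _)
  obtain ⟨β, hβ, hzero, hval⟩ := exists_avoiding_strategy_of_penalty B
    (fun l k => ∃ w ∉ S, p v k l w ≠ 0) hβ₀ (b := M - locVal p r x v)
    (fun k => by rw [hB β₀ hβ₀]; linarith [hopt k]) hε hεv (R := Rval p r x v)
    (fun l k => show M - A k l ≤ _ by
      linarith [locMat_eq_mplus_sub_btil_add p r x k l, btil_le_Rval p r x hmid k l, hjump k l])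
    (fun l k ⟨w, hw, hpw⟩ => show M - A k l + _ ≤ _ by
      have := le_sum_mul_max_zero (d := fun w => x v - x w)
        (c := Fintype.card (K v) * Rval p r x v ^ 2 / ε) (hp0 k l) hW
        (hpW k l w hpw) (by positivity)
        (le_of_eq_of_le (by ring) (hgap w hw))
      linarith [locMat_eq_mplus_sub_btil_add p r x k l, btil_le_Rval p r x hmid k l])
  refine ⟨β, hβ, fun w hw k l => ?_, fun k => by linarith [hval k, hB β hβ k]⟩
  by_cases hp : p v k l w = 0
  · rw [hp, mul_zero]
  · rw [hzero l k ⟨w, hw, hp⟩, zero_mul]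

end StochasticGame

theorem constructive_non_ergodicity_general
    (p r : ∀ v : V, K v → L v → V → ℝ)
    (hp0 : ∀ v k l u, 0 ≤ p v k l u)
    (W : ℝ) (hW : 0 < W) (hpW : ∀ v k l u, p v k l u ≠ 0 → 1 / W ≤ p v k l u)
    (ε : ℝ) (hε : 0 < ε) (x : V → ℝ)
    (I F : Set V)
    (a' b' : ℝ) (ha'0 : 0 ≤ a')
    (hb'le : b' ≤ mplus p r x)
    (hgap : 3 * ε ≤ b' - a')
    (ha'mid : a' < (mplus p r x + mminus p r x) / 2)
    (hb'mid : (mplus p r x + mminus p r x) / 2 ≤ b')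
    (hN4a : ∀ v ∈ I, b' ≤ locVal p r x v)
    (hN4b : ∀ u ∈ F, locVal p r x u < a')
    (hN5 : ∀ u ∉ I, ∀ v ∈ I,
      (Fintype.card (L v) : ℝ) * W * (Rval p r x v) ^ 2 / ε ≤ x u - x v)
    (hN6 : ∀ u ∈ F, ∀ v ∉ F,
      (Fintype.card (K u) : ℝ) * W * (Rval p r x u) ^ 2 / ε ≤ x u - x v) :
    ∃ (α : ∀ v, K v → ℝ) (β : ∀ v, L v → ℝ),
      (∀ v ∈ I, α v ∈ stdSimplex ℝ (K v)) ∧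
      (∀ u ∈ F, β u ∈ stdSimplex ℝ (L u)) ∧
      (∀ v ∈ I, ∀ u ∉ I, ∀ k l, α v k * p v k l u = 0) ∧
      (∀ u ∈ F, ∀ w ∉ F, ∀ k l, β u l * p u k l w = 0) ∧
      (∀ v ∈ I, ∀ βt ∈ stdSimplex ℝ (L v),
        b' - ε ≤ ∑ k, ∑ l, α v k * locMat p r x v k l * βt l) ∧
      (∀ u ∈ F, ∀ αt ∈ stdSimplex ℝ (K u),
        ∑ k, ∑ l, αt k * locMat p r x u k l * β u l < a' + ε) := by
  have hrow : ∀ v ∈ I, ∃ α ∈ stdSimplex ℝ (K v), (∀ u ∉ I, ∀ k l, α k * p v k l u = 0) ∧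
      ∀ l, locVal p r x v - ε ≤ (α ᵥ* locMat p r x v) l := fun v hv =>
    exists_row_strategy_staying_in_of_gap I (hp0 v) hW (hpW v) hε (hb'mid.trans (hN4a v hv))
      (by linarith [hN4a v hv]) fun u hu => hN5 u hu v hv
  have hcol : ∀ u ∈ F, ∃ β ∈ stdSimplex ℝ (L u), (∀ w ∉ F, ∀ k l, β l * p u k l w = 0) ∧
      ∀ k, (locMat p r x u *ᵥ β) k ≤ locVal p r x u + ε := fun u hu =>
    exists_col_strategy_staying_in_of_gap F (hp0 u) hW (hpW u) hε ((hN4b u hu).trans ha'mid)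
      (by linarith [hN4b u hu]) fun w hw => hN6 u hu w hw
  choose! α hα hαI hαval using hrow
  choose! β hβ hβF hβval using hcol
  refine ⟨α, β, hα, hβ, hαI, hβF, fun v hv βt hβt => ?_, fun u hu αt hαt => ?_⟩
  · rw [sum_sum_mul_eq_dotProduct_mulVec, dotProduct_mulVec, dotProduct_comm]
    exact le_dotProduct_of_forall_le hβt fun l => by linarith [hαval v hv l, hN4a v hv]
  · rw [sum_sum_mul_eq_dotProduct_mulVec]
    calc αt ⬝ᵥ locMat p r x u *ᵥ β u ≤ locVal p r x u + ε :=
          dotProduct_le_of_forall_le hαt (hβval u hu)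
      _ < a' + ε := by linarith [hN4b u hu]

/-- the constructive non-ergodicity criterion. Under conditions
(N4), (N5), (N6) there exist local strategies on `I` and `F` satisfying (N1),
(N2) and (N3) with `b = b' − ε` and `a = a' + ε`. -/
theorem constructive_non_ergodicity
    (p r : ∀ v : V, K v → L v → V → ℝ)
    (hp0 : ∀ v k l u, 0 ≤ p v k l u) (hp1 : ∀ v k l, ∑ u, p v k l u = 1)
    (hr0 : ∀ v k l u, 0 ≤ r v k l u)
    (W : ℝ) (hW : 0 < W) (hpW : ∀ v k l u, p v k l u ≠ 0 → 1 / W ≤ p v k l u)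
    (ε : ℝ) (hε : 0 < ε) (x : V → ℝ)
    (I F : Set V) (hIne : I.Nonempty) (hFne : F.Nonempty) (hIF : Disjoint I F)
    (a' b' : ℝ) (ha'0 : 0 ≤ a') (ha'le : a' ≤ mplus p r x)
    (hb'0 : 0 ≤ b') (hb'le : b' ≤ mplus p r x)
    (hgap : 3 * ε ≤ b' - a')
    (ha'mid : a' < (mplus p r x + mminus p r x) / 2)
    (hb'mid : (mplus p r x + mminus p r x) / 2 ≤ b')
    (hN4a : ∀ v ∈ I, b' ≤ locVal p r x v)
    (hN4b : ∀ u ∈ F, locVal p r x u < a')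
    (hN5 : ∀ u ∉ I, ∀ v ∈ I,
      (Fintype.card (L v) : ℝ) * W * (Rval p r x v) ^ 2 / ε ≤ x u - x v)
    (hN6 : ∀ u ∈ F, ∀ v ∉ F,
      (Fintype.card (K u) : ℝ) * W * (Rval p r x u) ^ 2 / ε ≤ x u - x v) :
    ∃ (α : ∀ v, K v → ℝ) (β : ∀ v, L v → ℝ),
      (∀ v ∈ I, α v ∈ stdSimplex ℝ (K v)) ∧
      (∀ u ∈ F, β u ∈ stdSimplex ℝ (L u)) ∧
      (∀ v ∈ I, ∀ u ∉ I, ∀ k l, α v k * p v k l u = 0) ∧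
      (∀ u ∈ F, ∀ w ∉ F, ∀ k l, β u l * p u k l w = 0) ∧
      (∀ v ∈ I, ∀ βt ∈ stdSimplex ℝ (L v),
        b' - ε ≤ ∑ k, ∑ l, α v k * locMat p r x v k l * βt l) ∧
      (∀ u ∈ F, ∀ αt ∈ stdSimplex ℝ (K u),
        ∑ k, ∑ l, αt k * locMat p r x u k l * β u l < a' + ε) :=
  constructive_non_ergodicity_general p r hp0 W hW hpW ε hε x I F a' b' ha'0 hb'le hgap ha'mid
    hb'mid hN4a hN4b hN5 hN6
end

section
/- Let Γ be a stochastic game, x ∈ ℝ^V a potential vector, m ∈ ℝ, and α a stationary strategy of player 1 such that min_{β̃∈Δ(L^v)} (α^v)ᵀ A^v(x) β̃ ≥ m for every v ∈ V. Then for every stationary strategy β' of player 2 and every initial position v ∈ V: g^v(α, β') ≥ m. Symmetrically, if β is a stationary strategy of player 2 with max_{α̃∈Δ(K^v)} α̃ᵀ A^v(x) β^v ≤ m for every v ∈ V, then g^v(α', β) ≤ m for every stationary strategy α' of player 1 and every v ∈ V. -/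
open Filter Matrix

variable {V : Type*} [Fintype V] [DecidableEq V] [Nonempty V]
  {K L : V → Type*} [∀ v, Fintype (K v)] [∀ v, Nonempty (K v)]
  [∀ v, Fintype (L v)] [∀ v, Nonempty (L v)]

/-! Let `Q = Q(α, β)`, `c = c(α, β)` and `d = c + (x - Q x)`, so that `d v = αᵛᵀ Aᵛ(x) βᵛ`.
Because `∑_{j ≤ N} Qʲ (x - Q x) = x - Q^{N+1} x` telescopes and every `Qʲ` is row-stochastic,
the Cesàro means of `Qʲ c` and of `Qʲ d` differ by at most `2‖x‖ / (N + 1)`. A row-stochastic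
matrix preserves lower and upper bounds of a vector, so a bound `m` on `d` passes to the Cesàro
means of `Qʲ d`, and hence to the liminf of those of `Qʲ c`. -/

open Topology

lemma le_liminf_of_tendsto_sub {ι : Type*} {f : Filter ι} [f.NeBot] {a b : ι → ℝ} {m : ℝ}
    (hab : Tendsto (fun i => b i - a i) f (𝓝 0)) (hb : ∀ i, m ≤ b i)
    (ha : IsBoundedUnder (· ≤ ·) f a) : m ≤ liminf a f := by
  refine le_of_forall_sub_le fun ε hε => le_liminf_of_le ha.isCoboundedUnder_ge ?_
  filter_upwards [hab.eventually_lt_const hε] with i hi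
  linarith [hb i]

lemma liminf_le_of_tendsto_sub {ι : Type*} {f : Filter ι} [f.NeBot] {a b : ι → ℝ} {m : ℝ}
    (hab : Tendsto (fun i => b i - a i) f (𝓝 0)) (hb : ∀ i, b i ≤ m)
    (ha : IsBoundedUnder (· ≥ ·) f a) : liminf a f ≤ m := by
  refine le_of_forall_pos_le_add fun ε hε => liminf_le_of_frequently_le ?_ ha
  refine (hab.eventually_const_lt (neg_neg_iff_pos.2 hε)).frequently.mono fun i hi => ?_
  linarith [hb i]

namespace Matrix

section Stochastic

variable {R n : Type*} [CommRing R] [PartialOrder R] [IsOrderedRing R] [Fintype n]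
  [DecidableEq n] {Q : Matrix n n R}

lemma le_mulVec_of_mem_rowStochastic (hQ : Q ∈ rowStochastic R n) {x : n → R} {a : R}
    (h : ∀ i, a ≤ x i) (j : n) : a ≤ (Q *ᵥ x) j := by
  have h0 := nonneg_mulVec_of_mem_rowStochastic hQ (x := x - a • 1) (by simpa using h) j
  rwa [mulVec_sub, mulVec_smul, one_vecMul_of_mem_rowStochastic hQ, Pi.sub_apply, Pi.smul_apply,
    Pi.one_apply, smul_eq_mul, mul_one, sub_nonneg] at h0

lemma mulVec_le_of_mem_rowStochastic (hQ : Q ∈ rowStochastic R n) {x : n → R} {b : R}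
    (h : ∀ i, x i ≤ b) (j : n) : (Q *ᵥ x) j ≤ b := by
  simpa [mulVec_neg] using le_mulVec_of_mem_rowStochastic hQ (x := -x) (a := -b)
    (fun i => neg_le_neg (h i)) j

end Stochastic

lemma sum_range_pow_mulVec_sub_mulVec {R n : Type*} [Ring R] [Fintype n] [DecidableEq n]
    (Q : Matrix n n R) (x : n → R) (N : ℕ) :
    ∑ j ∈ Finset.range N, Q ^ j *ᵥ (x - Q *ᵥ x) = x - Q ^ N *ᵥ x := by
  simp_rw [mulVec_sub, mulVec_mulVec, ← pow_succ]
  simpa using Finset.sum_range_sub' (fun j => Q ^ j *ᵥ x) N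

section CesaroMean

variable {n : Type*} [Fintype n] [DecidableEq n] {Q : Matrix n n ℝ}

noncomputable def cesaroMean (Q : Matrix n n ℝ) (c : n → ℝ) (N : ℕ) (v : n) : ℝ :=
  (1 / (N + 1 : ℝ)) * ∑ j ∈ Finset.range (N + 1), (Q ^ j *ᵥ c) v

lemma le_cesaroMean (hQ : Q ∈ rowStochastic ℝ n) {c : n → ℝ} {a : ℝ} (h : ∀ i, a ≤ c i)
    (N : ℕ) (v : n) : a ≤ cesaroMean Q c N v := by
  have hsum : (N + 1 : ℝ) * a ≤ ∑ j ∈ Finset.range (N + 1), (Q ^ j *ᵥ c) v := by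
    simpa using Finset.card_nsmul_le_sum (Finset.range (N + 1)) _ a
      fun j _ => le_mulVec_of_mem_rowStochastic (pow_mem hQ j) h v
  rw [cesaroMean, one_div, le_inv_mul_iff₀ (by positivity)]
  exact hsum

lemma cesaroMean_le (hQ : Q ∈ rowStochastic ℝ n) {c : n → ℝ} {b : ℝ} (h : ∀ i, c i ≤ b)
    (N : ℕ) (v : n) : cesaroMean Q c N v ≤ b := by
  have hsum : ∑ j ∈ Finset.range (N + 1), (Q ^ j *ᵥ c) v ≤ (N + 1 : ℝ) * b := by
    simpa using Finset.sum_le_card_nsmul (Finset.range (N + 1)) _ b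
      fun j _ => mulVec_le_of_mem_rowStochastic (pow_mem hQ j) h v
  rw [cesaroMean, one_div, inv_mul_le_iff₀ (by positivity)]
  exact hsum

lemma norm_mulVec_le_of_mem_rowStochastic (hQ : Q ∈ rowStochastic ℝ n) (x : n → ℝ) :
    ‖Q *ᵥ x‖ ≤ ‖x‖ := by
  refine (pi_norm_le_iff_of_nonneg (norm_nonneg x)).2 fun j => abs_le.2 ⟨?_, ?_⟩
  · exact le_mulVec_of_mem_rowStochastic hQ (fun i => (abs_le.1 (norm_le_pi_norm x i)).1) j
  · exact mulVec_le_of_mem_rowStochastic hQ (fun i => (abs_le.1 (norm_le_pi_norm x i)).2) j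

lemma cesaroMean_add_sub_mulVec (Q : Matrix n n ℝ) (c x : n → ℝ) (N : ℕ) (v : n) :
    cesaroMean Q (c + (x - Q *ᵥ x)) N v
      = cesaroMean Q c N v + (x v - (Q ^ (N + 1) *ᵥ x) v) / (N + 1) := by
  have htel := congrFun (sum_range_pow_mulVec_sub_mulVec Q x (N + 1)) v
  simp only [Finset.sum_apply] at htel
  simp only [cesaroMean, mulVec_add, Pi.add_apply, Finset.sum_add_distrib, htel, Pi.sub_apply]
  ring

lemma tendsto_cesaroMean_add_sub_mulVec_sub (hQ : Q ∈ rowStochastic ℝ n) (c x : n → ℝ)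
    (v : n) :
    Tendsto (fun N => cesaroMean Q (c + (x - Q *ᵥ x)) N v - cesaroMean Q c N v) atTop
      (𝓝 0) := by
  refine squeeze_zero_norm (a := fun N : ℕ => 2 * ‖x‖ * (1 / ((N : ℝ) + 1))) (fun N => ?_) ?_
  · rw [cesaroMean_add_sub_mulVec, add_sub_cancel_left, norm_div, div_eq_mul_one_div,
      Real.norm_of_nonneg (by positivity : (0 : ℝ) ≤ N + 1)]
    gcongr
    calc ‖x v - (Q ^ (N + 1) *ᵥ x) v‖ ≤ ‖x - Q ^ (N + 1) *ᵥ x‖ := norm_le_pi_norm (x - _) v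
      _ ≤ ‖x‖ + ‖Q ^ (N + 1) *ᵥ x‖ := norm_sub_le _ _
      _ ≤ 2 * ‖x‖ := by linarith [norm_mulVec_le_of_mem_rowStochastic (pow_mem hQ (N + 1)) x]
  · simpa using tendsto_one_div_add_atTop_nhds_zero_nat.const_mul (2 * ‖x‖)

lemma abs_cesaroMean_le (hQ : Q ∈ rowStochastic ℝ n) (c : n → ℝ) (N : ℕ) (v : n) :
    |cesaroMean Q c N v| ≤ ‖c‖ := by
  have hc (i : n) : |c i| ≤ ‖c‖ := norm_le_pi_norm c i
  exact abs_le.2 ⟨le_cesaroMean hQ (fun i => (abs_le.1 (hc i)).1) N v,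
    cesaroMean_le hQ (fun i => (abs_le.1 (hc i)).2) N v⟩

lemma le_liminf_cesaroMean (hQ : Q ∈ rowStochastic ℝ n) {c x : n → ℝ} {m : ℝ}
    (h : ∀ i, m ≤ (c + (x - Q *ᵥ x)) i) (v : n) :
    m ≤ liminf (fun N => cesaroMean Q c N v) atTop :=
  le_liminf_of_tendsto_sub (tendsto_cesaroMean_add_sub_mulVec_sub hQ c x v)
    (le_cesaroMean hQ h · v)
    (isBoundedUnder_of ⟨‖c‖, fun N => (abs_le.1 (abs_cesaroMean_le hQ c N v)).2⟩)

lemma liminf_cesaroMean_le (hQ : Q ∈ rowStochastic ℝ n) {c x : n → ℝ} {m : ℝ}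
    (h : ∀ i, (c + (x - Q *ᵥ x)) i ≤ m) (v : n) :
    liminf (fun N => cesaroMean Q c N v) atTop ≤ m :=
  liminf_le_of_tendsto_sub (tendsto_cesaroMean_add_sub_mulVec_sub hQ c x v)
    (cesaroMean_le hQ h · v)
    (isBoundedUnder_of ⟨-‖c‖, fun N => (abs_le.1 (abs_cesaroMean_le hQ c N v)).1⟩)

end CesaroMean

end Matrix

section Game

variable {V : Type*} [Fintype V] {K L : V → Type*} [∀ v, Fintype (K v)] [∀ v, Fintype (L v)]
  {p : ∀ v : V, K v → L v → V → ℝ} {α : ∀ v, K v → ℝ} {β : ∀ v, L v → ℝ}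

lemma Qmat_mem_rowStochastic [DecidableEq V] (hp0 : ∀ v k l u, 0 ≤ p v k l u)
    (hp1 : ∀ v k l, ∑ u, p v k l u = 1) (hα : ∀ v, α v ∈ stdSimplex ℝ (K v))
    (hβ : ∀ v, β v ∈ stdSimplex ℝ (L v)) : Qmat p α β ∈ rowStochastic ℝ V := by
  refine mem_rowStochastic_iff_sum.2 ⟨fun v u => ?_, fun v => ?_⟩
  · exact Finset.sum_nonneg fun k _ => Finset.sum_nonneg fun l _ =>
      mul_nonneg (mul_nonneg ((hα v).1 k) ((hβ v).1 l)) (hp0 v k l u)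
  · simp only [Qmat, of_apply]
    rw [Finset.sum_comm]
    simp_rw [Finset.sum_comm (s := Finset.univ (α := V)), ← Finset.mul_sum, hp1, mul_one,
      ← Finset.sum_mul_sum, (hα v).2, (hβ v).2, mul_one]

lemma sum_sum_mul_locMat_mul (r : ∀ v : V, K v → L v → V → ℝ)
    (hp1 : ∀ v k l, ∑ u, p v k l u = 1) (x : V → ℝ) {v : V} (hα : ∑ k, α v k = 1)
    (hβ : ∑ l, β v l = 1) :
    ∑ k, ∑ l, α v k * locMat p r x v k l * β v l
      = (cvec p r α β + (x - Qmat p α β *ᵥ x)) v := by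
  have hA (k : K v) (l : L v) : locMat p r x v k l
      = ∑ u, p v k l u * r v k l u + x v - ∑ u, p v k l u * x u := by
    simp only [locMat, of_apply, mul_sub, mul_add, Finset.sum_sub_distrib, Finset.sum_add_distrib,
      ← Finset.sum_mul, hp1, one_mul]
  have hx : x v = ∑ k, ∑ l, α v k * β v l * x v := by
    simp only [← Finset.sum_mul, ← Finset.sum_mul_sum, hα, hβ, one_mul]
  have hQ : (Qmat p α β *ᵥ x) v = ∑ k, ∑ l, α v k * β v l * ∑ u, p v k l u * x u := by
    simp only [Qmat, mulVec, dotProduct, of_apply, Finset.sum_mul, Finset.mul_sum, mul_assoc]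
    rw [Finset.sum_comm]
    exact Finset.sum_congr rfl fun k _ => Finset.sum_comm
  rw [Pi.add_apply, Pi.sub_apply, hQ, hx, cvec]
  simp only [hA, ← Finset.sum_sub_distrib, ← Finset.sum_add_distrib]
  exact Finset.sum_congr rfl fun k _ => Finset.sum_congr rfl fun l _ => by ring

end Game

/-- if a stationary strategy `α` of player 1 guarantees at least
`m` in every transformed local game `A^v(x)`, then it guarantees a limiting
average payoff of at least `m` from every initial position against every
stationary strategy of player 2; and symmetrically for player 2. -/
theorem locally_guaranteeing_implies_globally_guaranteeing
    (p r : ∀ v : V, K v → L v → V → ℝ)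
    (hp0 : ∀ v k l u, 0 ≤ p v k l u) (hp1 : ∀ v k l, ∑ u, p v k l u = 1)
    (x : V → ℝ) (m : ℝ) :
    ((∀ α : ∀ v, K v → ℝ, (∀ v, α v ∈ stdSimplex ℝ (K v)) →
      (∀ v, ∀ βt ∈ stdSimplex ℝ (L v),
        m ≤ ∑ k, ∑ l, α v k * locMat p r x v k l * βt l) →
      ∀ β' : ∀ v, L v → ℝ, (∀ v, β' v ∈ stdSimplex ℝ (L v)) →
        ∀ v, m ≤ gval p r α β' v)) ∧
    ((∀ β : ∀ v, L v → ℝ, (∀ v, β v ∈ stdSimplex ℝ (L v)) →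
      (∀ v, ∀ αt ∈ stdSimplex ℝ (K v),
        ∑ k, ∑ l, αt k * locMat p r x v k l * β v l ≤ m) →
      ∀ α' : ∀ v, K v → ℝ, (∀ v, α' v ∈ stdSimplex ℝ (K v)) →
        ∀ v, gval p r α' β v ≤ m)) := by
  refine ⟨fun α hα hloc β hβ v => ?_, fun β hβ hloc α hα v => ?_⟩
  · have hQ := Qmat_mem_rowStochastic hp0 hp1 hα hβ
    refine Matrix.le_liminf_cesaroMean hQ (x := x) (fun w => ?_) v
    rw [← sum_sum_mul_locMat_mul r hp1 x (hα w).2 (hβ w).2]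
    exact hloc w (β w) (hβ w)
  · have hQ := Qmat_mem_rowStochastic hp0 hp1 hα hβ
    refine Matrix.liminf_cesaroMean_le hQ (x := x) (fun w => ?_) v
    rw [← sum_sum_mul_locMat_mul r hp1 x (hα w).2 (hβ w).2]
    exact hloc w (α w) (hα w)
end
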